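/- arXiv:0903.4833 — 9 statements merged into one kernel-verified Lean document; each statement's English description precedes it below -/
import Mathlib

section
/- Let f:(0,z₀]→[1,∞) be a convex, non-increasing function with f(z₀)=1 which is differentiable at z₀ with f'(z₀)<0. Define g(k)=sup_{z≤z₀}(k-z)/f(z). Then g(k)=k-z₀ for all k ≥ k* where k* = z₀ - 1/f'(z₀). -/
/-! Convexity puts `f` above its left tangent line at `z₀`, so `f z ≥ 1 + f' (z - z₀) ≥ 1`.
For `k ≥ z₀ - 1/f'` we have `(k - z₀)(-f') ≥ 1`, and then
`k - z ≤ (k - z₀)(1 + f' (z - z₀)) ≤ (k - z₀) f z` for every `z ≤ z₀`.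
Hence `(k - z)/f z ≤ k - z₀`, with equality at `z = z₀`, so the supremum is attained there. -/

theorem ConvexOn.add_mul_sub_le_of_hasDerivWithinAt_Iio {S : Set ℝ} {f : ℝ → ℝ} {f' x y : ℝ}
    (hfc : ConvexOn ℝ S f) (hx : x ∈ S) (hy : y ∈ S) (hxy : x ≤ y)
    (hf' : HasDerivWithinAt f f' (Set.Iio y) y) : f y + f' * (x - y) ≤ f x := by
  rcases hxy.eq_or_lt with rfl | hlt
  · simp
  · have hslope := hfc.slope_le_of_hasDerivWithinAt_Iio hx hy hlt hf'
    rw [slope_def_field, div_le_iff₀ (sub_pos.2 hlt)] at hslope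
    linarith

theorem sub_div_le_of_one_add_mul_le {f' z z₀ k a : ℝ} (hf' : f' < 0) (hk : z₀ - 1 / f' ≤ k)
    (hz : z ≤ z₀) (ha : 1 + f' * (z - z₀) ≤ a) : (k - z) / a ≤ k - z₀ := by
  have hsteep : 1 ≤ (k - z₀) * -f' :=
    calc 1 = -(1 / f') * -f' := by rw [neg_mul_neg, one_div_mul_cancel hf'.ne]
      _ ≤ (k - z₀) * -f' := mul_le_mul_of_nonneg_right (by linarith) (neg_nonneg.2 hf'.le)
  have ha₁ : 1 ≤ a := by nlinarith
  rw [div_le_iff₀ (by linarith)]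
  nlinarith [mul_le_mul_of_nonneg_left hsteep (sub_nonneg.2 hz)]

theorem stmt_2_general (z₀ : ℝ) (hz₀ : 0 < z₀) (f g : ℝ → ℝ) (f' : ℝ)
    (hconv : ConvexOn ℝ (Set.Ioc 0 z₀) f)
    (hfz₀ : f z₀ = 1)
    (hderiv : HasDerivWithinAt f f' (Set.Iic z₀) z₀)
    (hf'neg : f' < 0)
    (hg : ∀ k ∈ Set.Ioi (0:ℝ),
      g k = sSup ((fun z => (k - z) / f z) '' Set.Ioc 0 z₀)) :
    ∀ k, z₀ - 1 / f' ≤ k → g k = k - z₀ := by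
  intro k hk
  have hz₀mem : z₀ ∈ Set.Ioc 0 z₀ := ⟨hz₀, le_rfl⟩
  have hk₀ : 0 < k := by
    have : 0 < -(1 / f') := neg_pos.2 (one_div_neg.2 hf'neg)
    linarith
  have hgreatest : IsGreatest ((fun z => (k - z) / f z) '' Set.Ioc 0 z₀) (k - z₀) := by
    refine ⟨⟨z₀, hz₀mem, by simp [hfz₀]⟩, ?_⟩
    rintro _ ⟨z, hz, rfl⟩
    have htangent := hconv.add_mul_sub_le_of_hasDerivWithinAt_Iio hz hz₀mem hz.2
      (hderiv.mono Set.Iio_subset_Iic_self)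
    exact sub_div_le_of_one_add_mul_le hf'neg hk hz.2 (hfz₀ ▸ htangent)
  rw [hg k hk₀, hgreatest.csSup_eq]

theorem stmt_2 (z₀ : ℝ) (hz₀ : 0 < z₀) (f g : ℝ → ℝ) (f' : ℝ)
    (hconv : ConvexOn ℝ (Set.Ioc 0 z₀) f)
    (hanti : AntitoneOn f (Set.Ioc 0 z₀))
    (hge : ∀ z ∈ Set.Ioc 0 z₀, 1 ≤ f z)
    (hfz₀ : f z₀ = 1)
    (hderiv : HasDerivWithinAt f f' (Set.Iic z₀) z₀)
    (hf'neg : f' < 0)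
    (hg : ∀ k ∈ Set.Ioi (0:ℝ),
      g k = sSup ((fun z => (k - z) / f z) '' Set.Ioc 0 z₀)) :
    ∀ k, z₀ - 1 / f' ≤ k → g k = k - z₀ :=
  stmt_2_general z₀ hz₀ f g f' hconv hfz₀ hderiv hf'neg hg
end

section
/- Let f:(0,z₀]→[1,∞) be convex, non-increasing with f(z₀)=1 and left derivative at z₀ strictly negative. Define g(k)=sup_{z≤z₀}(k-z)/f(z) for k>0, and F(z)=sup_{k≥z}(k-z)/g(k) for z∈(0,z₀]. Then F(z)=f(z) for all z∈(0,z₀] (self-duality of the transform). -/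
/-!
At every `z ∈ (0, z₀]` the convex function `f` has a supporting line of negative slope `s`
(its left derivative at `z`, which is at most `D⁻f(z₀) < 0`). That line vanishes at
`k = z - f z / s > z`, and since `f` lies above it, the supremum defining `g k` is attained at `z`:
`g k = (k - z) / f z`. On the other hand `g k' ≥ (k' - z) / f z` for every `k'`, so
`(k' - z) / g k' ≤ f z` for `k' ≥ z`, with equality at `k' = k`.
-/

open Set

def IsSubgradientOn (S : Set ℝ) (f : ℝ → ℝ) (x s : ℝ) : Prop :=
  ∀ y ∈ S, f x + s * (y - x) ≤ f y

namespace ConvexOn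

variable {S : Set ℝ} {f : ℝ → ℝ} {x d : ℝ}

lemma isSubgradientOn_of_hasDerivWithinAt_Iio (hfc : ConvexOn ℝ S f) (hx : x ∈ S)
    (hd : HasDerivWithinAt f d (Iio x) x) (hright : ∀ y ∈ S, x < y → d ≤ slope f x y) :
    IsSubgradientOn S f x d := by
  intro y hy
  rcases lt_trichotomy y x with hyx | rfl | hxy
  · have h := hfc.slope_le_of_hasDerivWithinAt_Iio hy hx hyx hd
    rw [slope_def_field, div_le_iff₀ (sub_pos.mpr hyx)] at h
    linarith
  · simp
  · have h := hright y hy hxy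
    rw [slope_def_field, le_div_iff₀ (sub_pos.mpr hxy)] at h
    linarith

lemma exists_neg_isSubgradientOn_Ioc {a b d : ℝ} (hfc : ConvexOn ℝ (Ioc a b) f)
    (hd : HasDerivWithinAt f d (Iio b) b) (hd_neg : d < 0) (hx : x ∈ Ioc a b) :
    ∃ s < 0, IsSubgradientOn (Ioc a b) f x s := by
  have hb : b ∈ Ioc a b := ⟨hx.1.trans_le hx.2, le_rfl⟩
  rcases hx.2.eq_or_lt with rfl | hxb
  · exact ⟨d, hd_neg, hfc.isSubgradientOn_of_hasDerivWithinAt_Iio hb hd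
      fun y hy hxy => absurd hy.2 hxy.not_ge⟩
  · have hx_int : x ∈ interior (Ioc a b) := by rw [interior_Ioc]; exact ⟨hx.1, hxb⟩
    have hleft_le_slope : ∀ y ∈ Ioc a b, x < y → derivWithin f (Iio x) x ≤ slope f x y :=
      fun y hy hxy => (hfc.leftDeriv_le_rightDeriv_of_mem_interior hx_int).trans
        (hfc.rightDeriv_le_slope_of_mem_interior hx_int hy hxy)
    refine ⟨derivWithin f (Iio x) x, ?_, hfc.isSubgradientOn_of_hasDerivWithinAt_Iio hx
      (hfc.hasDerivWithinAt_leftDeriv_of_mem_interior hx_int) hleft_le_slope⟩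
    calc derivWithin f (Iio x) x ≤ slope f x b := hleft_le_slope b hb hxb
      _ ≤ d := hfc.slope_le_of_hasDerivWithinAt_Iio hx hb hxb hd
      _ < 0 := hd_neg

end ConvexOn

section DualTransform

variable {S : Set ℝ} {f : ℝ → ℝ}

lemma bddAbove_image_sub_div (hS : S ⊆ Ioi 0) (hf : ∀ z ∈ S, 1 ≤ f z) (k : ℝ) :
    BddAbove ((fun z => (k - z) / f z) '' S) := by
  refine ⟨|k|, ?_⟩
  rintro _ ⟨z, hz, rfl⟩
  have hz_pos : 0 < z := hS hz
  rcases le_or_gt (k - z) 0 with hkz | hkz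
  · exact (div_nonpos_of_nonpos_of_nonneg hkz (zero_le_one.trans (hf z hz))).trans (abs_nonneg k)
  · calc (k - z) / f z ≤ k - z := div_le_self hkz.le (hf z hz)
      _ ≤ |k| := by linarith [le_abs_self k]

lemma isGreatest_image_sub_div (hf : ∀ y ∈ S, 0 < f y) {z s k : ℝ} (hz : z ∈ S)
    (hsub : IsSubgradientOn S f z s) (hzk : z < k) (hk : f z + s * (k - z) = 0) :
    IsGreatest ((fun y => (k - y) / f y) '' S) ((k - z) / f z) := by
  refine ⟨mem_image_of_mem _ hz, ?_⟩
  rintro _ ⟨y, hy, rfl⟩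
  rw [div_le_div_iff₀ (hf y hy) (hf z hz)]
  have hline : (k - z) * f y - (k - y) * f z = (k - z) * (f y - (f z + s * (y - z))) := by
    linear_combination (y - z) * hk
  linarith [mul_nonneg (sub_pos.mpr hzk).le (sub_nonneg.mpr (hsub y hy))]

lemma isGreatest_image_sub_div_of_le {g : ℝ → ℝ} {z c k : ℝ} (hc : 0 < c)
    (hle : ∀ k' ≥ z, (k' - z) / c ≤ g k') (hzk : z < k) (hk : g k = (k - z) / c) :
    IsGreatest ((fun k' => (k' - z) / g k') '' Ici z) c := by
  refine ⟨⟨k, hzk.le, ?_⟩, ?_⟩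
  · simp only [hk, div_div_cancel₀ (sub_pos.mpr hzk).ne']
  rintro _ ⟨k', hk', rfl⟩
  rcases (mem_Ici.mp hk').eq_or_lt with rfl | hzk'
  · simpa using hc.le
  · have hpos : 0 < (k' - z) / c := div_pos (sub_pos.mpr hzk') hc
    calc (k' - z) / g k' ≤ (k' - z) / ((k' - z) / c) :=
          div_le_div_of_nonneg_left (sub_pos.mpr hzk').le hpos (hle k' hk')
      _ = c := div_div_cancel₀ (sub_pos.mpr hzk').ne'

end DualTransform

theorem stmt_3_general (z₀ : ℝ) (f g F : ℝ → ℝ) (f' : ℝ)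
    (hconv : ConvexOn ℝ (Set.Ioc 0 z₀) f)
    (hge : ∀ z ∈ Set.Ioc 0 z₀, 1 ≤ f z)
    (hderiv : HasDerivWithinAt f f' (Set.Iio z₀) z₀)
    (hf'neg : f' < 0)
    (hg : ∀ k ∈ Set.Ioi (0:ℝ),
      g k = sSup ((fun z => (k - z) / f z) '' Set.Ioc 0 z₀))
    (hF : ∀ z ∈ Set.Ioc (0:ℝ) z₀,
      F z = sSup ((fun k => (k - z) / g k) '' Set.Ici z)) :
    ∀ z ∈ Set.Ioc (0:ℝ) z₀, F z = f z := by
  intro z hz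
  have hf_pos : ∀ y ∈ Ioc 0 z₀, 0 < f y := fun y hy => one_pos.trans_le (hge y hy)
  have hbdd := bddAbove_image_sub_div (fun y hy => hy.1) hge
  obtain ⟨s, hs, hsub⟩ := hconv.exists_neg_isSubgradientOn_Ioc hderiv hf'neg hz
  set k := z - f z / s
  have hzk : z < k := by have := div_neg_of_pos_of_neg (hf_pos z hz) hs; linarith
  have hk : f z + s * (k - z) = 0 := by simp only [k]; field_simp [hs.ne]; ring
  have hle : ∀ k' ≥ z, (k' - z) / f z ≤ g k' := fun k' hk' => by
    rw [hg k' (hz.1.trans_le hk')]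
    exact le_csSup (hbdd k') (mem_image_of_mem _ hz)
  have hgk : g k = (k - z) / f z := by
    rw [hg k (hz.1.trans hzk)]
    exact (isGreatest_image_sub_div hf_pos hz hsub hzk hk).csSup_eq
  rw [hF z hz]
  exact (isGreatest_image_sub_div_of_le (hf_pos z hz) hle hzk hgk).csSup_eq

theorem stmt_3 (z₀ : ℝ) (hz₀ : 0 < z₀) (f g F : ℝ → ℝ) (f' : ℝ)
    (hconv : ConvexOn ℝ (Set.Ioc 0 z₀) f)
    (hanti : AntitoneOn f (Set.Ioc 0 z₀))
    (hge : ∀ z ∈ Set.Ioc 0 z₀, 1 ≤ f z)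
    (hfz₀ : f z₀ = 1)
    (hderiv : HasDerivWithinAt f f' (Set.Iio z₀) z₀)
    (hf'neg : f' < 0)
    (hg : ∀ k ∈ Set.Ioi (0:ℝ),
      g k = sSup ((fun z => (k - z) / f z) '' Set.Ioc 0 z₀))
    (hF : ∀ z ∈ Set.Ioc (0:ℝ) z₀,
      F z = sSup ((fun k => (k - z) / g k) '' Set.Ici z)) :
    ∀ z ∈ Set.Ioc (0:ℝ) z₀, F z = f z :=
  stmt_3_general z₀ f g F f' hconv hge hderiv hf'neg hg hF
end

section
/- Let g:(0,∞)→[0,∞) be a non-negative, non-decreasing convex function satisfying (k-z₀)⁺ ≤ g(k) ≤ k for all k and g(k)=k-z₀ for k ≥ k* (for some k*>z₀). Define f(z)=sup_{k≥z}(k-z)/g(k) for z∈(0,z₀]. Then g(k)=sup_{z≤z₀}(k-z)/f(z) for all k>0. -/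
/-!
For every `z`, the definition of `f` gives `k - z ≤ f z * g k`, i.e. `(k - z) / f z ≤ g k`. The
only subtlety is `g k = 0` with `k > z`: then `g`, being continuous and positive at `kstar`, takes
arbitrarily small positive values to the right of `k`, so `f z = ∞` (in Lean `sSup` of an unbounded
set is `0`, and so is the quotient).

Conversely, if `g k > 0` take a supporting line of `g` at `k`; it has the form `m * (t - zₖ)` with
`0 < m ≤ 1` and `zₖ ∈ [0, z₀]`. For `z ≥ zₖ` it bounds `f z ≤ 1 / m`, hence
`(k - z) / f z ≥ m * (k - z)`, which tends to `m * (k - zₖ) = g k` as `z ↓ zₖ`.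
-/

open Set Filter Topology

theorem ConvexOn.add_rightDeriv_mul_sub_le {S : Set ℝ} {g : ℝ → ℝ} {x t : ℝ}
    (hg : ConvexOn ℝ S g) (hx : x ∈ interior S) (ht : t ∈ S) :
    g x + derivWithin g (Ioi x) x * (t - x) ≤ g t := by
  rcases lt_trichotomy t x with htx | rfl | hxt
  · have h := (hg.slope_le_leftDeriv_of_mem_interior ht hx htx).trans
      (hg.leftDeriv_le_rightDeriv_of_mem_interior hx)
    rw [slope_def_field, div_le_iff₀ (sub_pos.2 htx)] at h
    linarith
  · simp
  · have h := hg.rightDeriv_le_slope_of_mem_interior hx ht hxt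
    rw [slope_def_field, le_div_iff₀ (sub_pos.2 hxt)] at h
    linarith

def ratioSet (g : ℝ → ℝ) (z : ℝ) : Set ℝ := (fun k => (k - z) / g k) '' Ici z

noncomputable def ratioSup (g : ℝ → ℝ) (z : ℝ) : ℝ := sSup (ratioSet g z)

section RatioSet

variable {g : ℝ → ℝ} {z k : ℝ}

theorem ratioSet_nonempty : (ratioSet g z).Nonempty := nonempty_Ici.image _

theorem sub_le_ratioSup_mul (hb : BddAbove (ratioSet g z)) (hzk : z ≤ k) (hgk : 0 < g k) :
    k - z ≤ ratioSup g z * g k :=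
  (div_le_iff₀ hgk).1 (le_csSup hb ⟨k, hzk, rfl⟩)

theorem one_le_ratioSup (hb : BddAbove (ratioSet g z)) (hzk : z ≤ k) (hgk : 0 < g k)
    (hle : g k ≤ k - z) : 1 ≤ ratioSup g z :=
  le_of_mul_le_mul_right (by linarith [sub_le_ratioSup_mul hb hzk hgk]) hgk

theorem ratioSup_nonneg (hg : ∀ t, z ≤ t → 0 ≤ g t) : 0 ≤ ratioSup g z :=
  Real.sSup_nonneg <| by
    rintro _ ⟨t, ht, rfl⟩
    exact div_nonneg (sub_nonneg.2 ht) (hg t ht)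

theorem not_bddAbove_ratioSet_of_eq_zero {b : ℝ} (hcont : ContinuousOn g (Icc k b))
    (hzk : z < k) (hkb : k ≤ b) (hgk : g k = 0) (hgb : 0 < g b) :
    ¬ BddAbove (ratioSet g z) := by
  rintro ⟨M, hM⟩
  set y := min (g b) ((k - z) / (|M| + 1))
  have hy : 0 < y := lt_min hgb (div_pos (sub_pos.2 hzk) (by positivity))
  obtain ⟨t, ht, hty⟩ := intermediate_value_Icc hkb hcont ⟨hgk ▸ hy.le, min_le_left _ _⟩
  have hlarge : |M| + 1 ≤ (t - z) / g t := by
    rw [hty, le_div_iff₀ hy]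
    calc (|M| + 1) * y ≤ (|M| + 1) * ((k - z) / (|M| + 1)) :=
          mul_le_mul_of_nonneg_left (min_le_right _ _) (by positivity)
      _ = k - z := by field_simp
      _ ≤ t - z := by linarith [ht.1]
  linarith [le_abs_self M, hM ⟨t, hzk.le.trans ht.1, rfl⟩]

theorem forall_mem_ratioSet_le_inv {m : ℝ} (hm : 0 < m) (hline : ∀ t, z ≤ t → m * (t - z) ≤ g t) :
    ∀ x ∈ ratioSet g z, x ≤ m⁻¹ := by
  rintro _ ⟨t, ht, rfl⟩
  dsimp only
  have hgt : 0 ≤ g t := (mul_nonneg hm.le (sub_nonneg.2 ht)).trans (hline t ht)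
  rcases hgt.eq_or_lt with hgt0 | hgt_pos
  · rw [← hgt0, div_zero]
    positivity
  · rw [div_le_iff₀ hgt_pos, ← div_eq_inv_mul, le_div_iff₀' hm]
    exact hline t ht

end RatioSet

structure IsAdmissible (g : ℝ → ℝ) (z₀ kstar : ℝ) : Prop where
  pos : 0 < z₀
  lt : z₀ < kstar
  convexOn : ConvexOn ℝ (Ioi 0) g
  bounds : ∀ k ∈ Ioi (0 : ℝ), max (k - z₀) 0 ≤ g k ∧ g k ≤ k
  eq_sub_of_le : ∀ k, kstar ≤ k → g k = k - z₀

namespace IsAdmissible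

variable {g : ℝ → ℝ} {z₀ kstar z k : ℝ}

theorem nonneg (hg : IsAdmissible g z₀ kstar) (hk : 0 < k) : 0 ≤ g k :=
  (le_max_right _ _).trans (hg.bounds k hk).1

theorem sub_le (hg : IsAdmissible g z₀ kstar) (hk : 0 < k) : k - z₀ ≤ g k :=
  (le_max_left _ _).trans (hg.bounds k hk).1

theorem apply_le_self (hg : IsAdmissible g z₀ kstar) (hk : 0 < k) : g k ≤ k :=
  (hg.bounds k hk).2

theorem one_le_ratioSup (hg : IsAdmissible g z₀ kstar) (hz : z ≤ z₀)
    (hb : BddAbove (ratioSet g z)) : 1 ≤ ratioSup g z := by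
  have hgk := hg.eq_sub_of_le kstar le_rfl
  exact _root_.one_le_ratioSup hb (by linarith [hg.lt]) (by linarith [hg.lt]) (by linarith)

theorem sub_le_ratioSup_mul (hg : IsAdmissible g z₀ kstar) (hz : 0 < z)
    (hb : BddAbove (ratioSet g z)) (hzk : z ≤ k) : k - z ≤ ratioSup g z * g k := by
  rcases (hg.nonneg (hz.trans_le hzk)).eq_or_lt with hgk | hgk
  · obtain rfl : z = k := hzk.antisymm <| not_lt.1 fun hzk' => by
      set b := max k kstar
      have hcont : ContinuousOn g (Icc k b) := (hg.convexOn.continuousOn isOpen_Ioi).mono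
        fun t ht => hz.trans (hzk'.trans_le ht.1)
      have hgb : 0 < g b := by
        rw [hg.eq_sub_of_le b (le_max_right _ _)]
        linarith [le_max_right k kstar, hg.lt]
      exact not_bddAbove_ratioSet_of_eq_zero hcont hzk' (le_max_left _ _) hgk.symm hgb hb
    rw [sub_self, ← hgk, mul_zero]
  · exact _root_.sub_le_ratioSup_mul hb hzk hgk

theorem div_ratioSup_le (hg : IsAdmissible g z₀ kstar) (hz : z ∈ Ioc 0 z₀) (hk : 0 < k) :
    (k - z) / ratioSup g z ≤ g k := by
  by_cases hb : BddAbove (ratioSet g z)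
  · have hf := hg.one_le_ratioSup hz.2 hb
    rcases lt_or_ge k z with hkz | hzk
    · exact (div_nonpos_of_nonpos_of_nonneg (by linarith) (by linarith)).trans (hg.nonneg hk)
    · rw [div_le_iff₀ (by linarith), mul_comm]
      exact hg.sub_le_ratioSup_mul hz.1 hb hzk
  · rw [ratioSup, Real.sSup_of_not_bddAbove hb, div_zero]
    exact hg.nonneg hk

theorem exists_supporting_line (hg : IsAdmissible g z₀ kstar) (hk : 0 < k) (hgk : 0 < g k) :
    ∃ m zₖ, 0 < m ∧ zₖ ∈ Icc 0 z₀ ∧ zₖ < k ∧ g k = m * (k - zₖ) ∧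
      ∀ t, 0 < t → m * (t - zₖ) ≤ g t := by
  set m := derivWithin g (Ioi k) k
  have hint : k ∈ interior (Ioi (0 : ℝ)) := by rwa [interior_Ioi]
  have hsupp : ∀ t, 0 < t → g k + m * (t - k) ≤ g t := fun t ht =>
    hg.convexOn.add_rightDeriv_mul_sub_le hint ht
  have hm1 : m ≤ 1 := by
    set y := max kstar (k + 1)
    have hky : k < y := (lt_add_one k).trans_le (le_max_right _ _)
    have h := hg.convexOn.rightDeriv_le_slope_of_mem_interior hint
      (show y ∈ Ioi 0 from hk.trans hky) hky
    rw [slope_def_field, hg.eq_sub_of_le y (le_max_left _ _)] at h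
    exact h.trans ((div_le_one (by linarith)).2 (by linarith [hg.sub_le hk]))
  -- letting `t ↓ 0` in `g k + m * (t - k) ≤ g t ≤ t`
  have hmk : g k ≤ m * k := by
    have hlim : Tendsto (fun t => (1 - m) * t) (𝓝[>] 0) (𝓝 0) := by
      simpa using ((continuous_const_mul (1 - m)).tendsto 0).mono_left nhdsWithin_le_nhds
    have h := ge_of_tendsto hlim <| eventually_nhdsWithin_of_forall fun t (ht : 0 < t) => by
      show g k - m * k ≤ (1 - m) * t
      linarith [hsupp t ht, hg.apply_le_self ht]
    linarith
  have hm : 0 < m := pos_of_mul_pos_left (hgk.trans_le hmk) hk.le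
  have hzₖ : m * (k - (k - g k / m)) = g k := by rw [sub_sub_cancel, mul_div_cancel₀ _ hm.ne']
  refine ⟨m, k - g k / m, hm, ⟨?_, ?_⟩, by linarith [div_pos hgk hm], hzₖ.symm, fun t ht => ?_⟩
  · rw [sub_nonneg, div_le_iff₀ hm]
    linarith
  · rw [sub_le_comm, le_div_iff₀ hm]
    nlinarith [hg.sub_le hk]
  · calc m * (t - (k - g k / m)) = g k + m * (t - k) := by field_simp; ring
      _ ≤ g t := hsupp t ht

theorem mul_sub_le_div_ratioSup (hg : IsAdmissible g z₀ kstar) {m zₖ : ℝ} (hm : 0 < m)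
    (hline : ∀ t, 0 < t → m * (t - zₖ) ≤ g t) (hz : z ∈ Ioc 0 z₀) (hzₖ : zₖ ≤ z)
    (hzk : z ≤ k) : m * (k - z) ≤ (k - z) / ratioSup g z := by
  have hle : ∀ x ∈ ratioSet g z, x ≤ m⁻¹ := forall_mem_ratioSet_le_inv hm fun t ht => by
    nlinarith [hline t (hz.1.trans_le ht)]
  have hf : 1 ≤ ratioSup g z := hg.one_le_ratioSup hz.2 ⟨m⁻¹, hle⟩
  have hmf : m * ratioSup g z ≤ 1 := by
    rw [← le_inv_mul_iff₀ hm, mul_one]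
    exact csSup_le ratioSet_nonempty hle
  rw [le_div_iff₀ (by linarith)]
  nlinarith

theorem le_sSup_div_ratioSup (hg : IsAdmissible g z₀ kstar) (hk : 0 < k)
    (hbdd : BddAbove ((fun z => (k - z) / ratioSup g z) '' Ioc 0 z₀)) :
    g k ≤ sSup ((fun z => (k - z) / ratioSup g z) '' Ioc 0 z₀) := by
  rcases (hg.nonneg hk).eq_or_lt with hgk | hgk
  · have hz : min k z₀ ∈ Ioc 0 z₀ := ⟨lt_min hk hg.pos, min_le_right _ _⟩
    refine le_csSup_of_le hbdd ⟨_, hz, rfl⟩ (hgk ▸ div_nonneg ?_ ?_)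
    · exact sub_nonneg.2 (min_le_left _ _)
    · exact ratioSup_nonneg fun t ht => hg.nonneg (hz.1.trans_le ht)
  obtain ⟨m, zₖ, hm, ⟨hzₖ0, hzₖz₀⟩, hzₖk, hgk_eq, hline⟩ := hg.exists_supporting_line hk hgk
  have hlim : Tendsto (fun δ => m * (k - max zₖ δ)) (𝓝[>] 0) (𝓝 (g k)) := by
    have hcont : Continuous fun δ => m * (k - max zₖ δ) := by fun_prop
    have h := (hcont.tendsto 0).mono_left (nhdsWithin_le_nhds (s := Ioi 0))
    rwa [max_eq_left hzₖ0, ← hgk_eq] at h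
  refine le_of_tendsto hlim (eventually_of_mem (Ioo_mem_nhdsGT (lt_min hk hg.pos)) ?_)
  rintro δ ⟨hδ, hδk⟩
  have hz : max zₖ δ ∈ Ioc 0 z₀ :=
    ⟨hδ.trans_le (le_max_right _ _), max_le hzₖz₀ (hδk.le.trans (min_le_right _ _))⟩
  exact (hg.mul_sub_le_div_ratioSup hm hline hz (le_max_left _ _)
    (max_le hzₖk.le (hδk.le.trans (min_le_left _ _)))).trans (le_csSup hbdd ⟨_, hz, rfl⟩)

theorem eq_sSup_div_ratioSup (hg : IsAdmissible g z₀ kstar) (hk : 0 < k) :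
    g k = sSup ((fun z => (k - z) / ratioSup g z) '' Ioc 0 z₀) := by
  have hub : ∀ x ∈ (fun z => (k - z) / ratioSup g z) '' Ioc 0 z₀, x ≤ g k := by
    rintro _ ⟨z, hz, rfl⟩
    exact hg.div_ratioSup_le hz hk
  exact le_antisymm (hg.le_sSup_div_ratioSup hk ⟨g k, hub⟩)
    (csSup_le ⟨_, ⟨z₀, ⟨hg.pos, le_rfl⟩, rfl⟩⟩ hub)

end IsAdmissible

theorem stmt_4_general (z₀ kstar : ℝ) (hz₀ : 0 < z₀) (hk : z₀ < kstar)
    (g f : ℝ → ℝ)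
    (hconv : ConvexOn ℝ (Set.Ioi 0) g)
    (hbd : ∀ k ∈ Set.Ioi (0:ℝ), max (k - z₀) 0 ≤ g k ∧ g k ≤ k)
    (hlin : ∀ k, kstar ≤ k → g k = k - z₀)
    (hf : ∀ z ∈ Set.Ioc (0:ℝ) z₀,
      f z = sSup ((fun k => (k - z) / g k) '' Set.Ici z)) :
    ∀ k ∈ Set.Ioi (0:ℝ),
      g k = sSup ((fun z => (k - z) / f z) '' Set.Ioc 0 z₀) := by
  intro k hk0
  have hf' : (fun z => (k - z) / f z) '' Ioc 0 z₀ =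
      (fun z => (k - z) / ratioSup g z) '' Ioc 0 z₀ :=
    image_congr fun z hz => by rw [hf z hz, ratioSup, ratioSet]
  rw [hf']
  exact (IsAdmissible.mk hz₀ hk hconv hbd hlin).eq_sSup_div_ratioSup hk0

theorem stmt_4 (z₀ kstar : ℝ) (hz₀ : 0 < z₀) (hk : z₀ < kstar)
    (g f : ℝ → ℝ)
    (hconv : ConvexOn ℝ (Set.Ioi 0) g)
    (hmono : MonotoneOn g (Set.Ioi 0))
    (hbd : ∀ k ∈ Set.Ioi (0:ℝ), max (k - z₀) 0 ≤ g k ∧ g k ≤ k)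
    (hlin : ∀ k, kstar ≤ k → g k = k - z₀)
    (hf : ∀ z ∈ Set.Ioc (0:ℝ) z₀,
      f z = sSup ((fun k => (k - z) / g k) '' Set.Ici z)) :
    ∀ k ∈ Set.Ioi (0:ℝ),
      g k = sSup ((fun z => (k - z) / f z) '' Set.Ioc 0 z₀) :=
  stmt_4_general z₀ kstar hz₀ hk g f hconv hbd hlin hf
end

section
/- Suppose σ:(0,∞)→(0,∞) is continuous, r>0, c>0, and define φ(x) = x·∫_x^∞ y^{-2} exp(-∫_c^y 2r/(zσ(z)²) dz) dy for x>0 (assuming the integrals are finite). Then φ solves the ODE (1/2)σ(x)²x²φ''(x) + r x φ'(x) − r φ(x) = 0. -/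
/-!
With `F y = ∫_c^y 2r/(zσ(z)²) dz`, `g y = y⁻² e^{-F y}` and `G x = ∫_x^∞ g`, we have `φ = x G`,
`G' = -g` and `g' = -(2/y + F') g`. Hence `φ' = G - x g` and `φ'' = -2g - x g' = x F' g = 2r g / σ²`,
so `½σ²x²φ'' = r x² g = -(r x φ' - r φ)`.
-/

open MeasureTheory intervalIntegral Set Filter Topology

section Primitives

variable {E : Type*} [NormedAddCommGroup E] [NormedSpace ℝ E] [CompleteSpace E]

theorem hasDerivAt_integral_Ioi {g : ℝ → E} {a x : ℝ} (hg : IntegrableOn g (Ioi a))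
    (hax : a < x) (hgx : ContinuousAt g x) :
    HasDerivAt (fun b => ∫ y in Ioi b, g y) (-g x) x := by
  have hsplit : ∀ b ∈ Ioi a, ∫ y in Ioi b, g y = (∫ y in Ioi a, g y) - ∫ y in a..b, g y :=
    fun b hb => by rw [← integral_Ioi_sub_Ioi hg (le_of_lt hb), sub_sub_cancel]
  have hprimitive : HasDerivAt (fun b => ∫ y in a..b, g y) (g x) x :=
    integral_hasDerivAt_right
      ((intervalIntegrable_iff_integrableOn_Ioc_of_le hax.le).2 (hg.mono_set Ioc_subset_Ioi_self))
      (AEStronglyMeasurable.stronglyMeasurableAtFilter_of_mem hg.aestronglyMeasurable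
        (Ioi_mem_nhds hax)) hgx
  exact (hprimitive.const_sub _).congr_of_eventuallyEq (eventually_of_mem (Ioi_mem_nhds hax) hsplit)

theorem hasDerivAt_integral_of_continuousOn_Ioi {f : ℝ → E} {a c y : ℝ}
    (hf : ContinuousOn f (Ioi a)) (hc : a < c) (hy : a < y) :
    HasDerivAt (fun b => ∫ z in c..b, f z) (f y) y :=
  integral_hasDerivAt_right
    ((hf.mono fun _ hz => (lt_min hc hy).trans_le hz.1).intervalIntegrable)
    (hf.stronglyMeasurableAtFilter isOpen_Ioi y hy) (hf.continuousAt (Ioi_mem_nhds hy))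

end Primitives

theorem HasDerivAt.one_div_sq_mul_exp_neg {F : ℝ → ℝ} {F' y : ℝ} (hF : HasDerivAt F F' y)
    (hy : y ≠ 0) :
    HasDerivAt (fun y => 1 / y ^ 2 * Real.exp (-F y))
      (-(2 / y + F') * (1 / y ^ 2 * Real.exp (-F y))) y := by
  refine (((hasDerivAt_const y 1).fun_div (hasDerivAt_pow 2 y) (pow_ne_zero 2 hy)).mul
    hF.neg.exp).congr_deriv ?_
  simp only [Pi.neg_apply]
  field_simp
  ring

section SecondDerivative

variable {φ G g : ℝ → ℝ} {x : ℝ}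

theorem deriv_eventuallyEq_of_eventuallyEq_mul_self (hφ : φ =ᶠ[𝓝 x] fun y => y * G y)
    (hG : ∀ᶠ y in 𝓝 x, HasDerivAt G (-g y) y) :
    deriv φ =ᶠ[𝓝 x] fun y => G y - y * g y := by
  filter_upwards [hφ.eventuallyEq_nhds, hG] with y hφy hGy
  have hprod : HasDerivAt (fun y => y * G y) (G y - y * g y) y := by
    refine ((hasDerivAt_id y).mul hGy).congr_deriv ?_
    simp only [id]
    ring
  exact (hprod.congr_of_eventuallyEq hφy).deriv

theorem hasDerivAt_deriv_of_eventuallyEq_mul_self {g' : ℝ} (hφ : φ =ᶠ[𝓝 x] fun y => y * G y)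
    (hG : ∀ᶠ y in 𝓝 x, HasDerivAt G (-g y) y) (hg : HasDerivAt g g' x) :
    HasDerivAt (deriv φ) (-2 * g x - x * g') x := by
  have hdiff := hG.self_of_nhds.sub ((hasDerivAt_id x).mul hg)
  refine (hdiff.congr_of_eventuallyEq
    (deriv_eventuallyEq_of_eventuallyEq_mul_self hφ hG)).congr_deriv ?_
  simp only [id]
  ring

end SecondDerivative

theorem stmt_7_general (σ : ℝ → ℝ) (r c : ℝ) (hc : 0 < c)
    (hσpos : ∀ x > (0:ℝ), 0 < σ x)
    (hσcont : ContinuousOn σ (Set.Ioi 0))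
    (φ : ℝ → ℝ)
    (hφ : ∀ x > (0:ℝ), φ x =
      x * ∫ y in Set.Ioi x, (1 / y ^ 2) *
        Real.exp (-(∫ z in c..y, 2 * r / (z * σ z ^ 2))))
    (hint : ∀ x > (0:ℝ), IntegrableOn
      (fun y => (1 / y ^ 2) *
        Real.exp (-(∫ z in c..y, 2 * r / (z * σ z ^ 2)))) (Set.Ioi x)) :
    ∀ x > (0:ℝ),
      (1 / 2) * σ x ^ 2 * x ^ 2 * deriv (deriv φ) x
        + r * x * deriv φ x - r * φ x = 0 := by
  intro x hx
  set f : ℝ → ℝ := fun z => 2 * r / (z * σ z ^ 2) with hf_def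
  set g : ℝ → ℝ := fun y => 1 / y ^ 2 * Real.exp (-∫ z in c..y, f z)
  set G : ℝ → ℝ := fun b => ∫ y in Ioi b, g y
  have hf : ContinuousOn f (Ioi 0) :=
    continuousOn_const.div (continuousOn_id.mul (hσcont.pow 2))
      fun z hz => (mul_pos hz (pow_pos (hσpos z hz) 2)).ne'
  have hg : ∀ y > 0, HasDerivAt g (-(2 / y + f y) * g y) y := fun y hy =>
    (hasDerivAt_integral_of_continuousOn_Ioi hf hc hy).one_div_sq_mul_exp_neg hy.ne'
  have hG : ∀ y > 0, HasDerivAt G (-g y) y := fun y hy =>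
    hasDerivAt_integral_Ioi (hint (y / 2) (by positivity)) (by linarith) (hg y hy).continuousAt
  have hφG : φ =ᶠ[𝓝 x] fun y => y * G y := eventually_of_mem (Ioi_mem_nhds hx) hφ
  have hGx : ∀ᶠ y in 𝓝 x, HasDerivAt G (-g y) y := eventually_of_mem (Ioi_mem_nhds hx) hG
  rw [(hasDerivAt_deriv_of_eventuallyEq_mul_self hφG hGx (hg x hx)).deriv,
    (deriv_eventuallyEq_of_eventuallyEq_mul_self hφG hGx).eq_of_nhds, hφG.eq_of_nhds, hf_def]
  have hσx := (hσpos x hx).ne'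
  field_simp
  ring

theorem stmt_7 (σ : ℝ → ℝ) (r c : ℝ) (hr : 0 < r) (hc : 0 < c)
    (hσpos : ∀ x > (0:ℝ), 0 < σ x)
    (hσcont : ContinuousOn σ (Set.Ioi 0))
    (φ : ℝ → ℝ)
    (hφ : ∀ x > (0:ℝ), φ x =
      x * ∫ y in Set.Ioi x, (1 / y ^ 2) *
        Real.exp (-(∫ z in c..y, 2 * r / (z * σ z ^ 2))))
    (hint : ∀ x > (0:ℝ), IntegrableOn
      (fun y => (1 / y ^ 2) *
        Real.exp (-(∫ z in c..y, 2 * r / (z * σ z ^ 2)))) (Set.Ioi x)) :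
    ∀ x > (0:ℝ),
      (1 / 2) * σ x ^ 2 * x ^ 2 * deriv (deriv φ) x
        + r * x * deriv φ x - r * φ x = 0 :=
  stmt_7_general σ r c hc hσpos hσcont φ hφ hint
end

section
/- With φ(x) = x·∫_x^∞ y^{-2} exp(-∫_c^y 2r/(zσ(z)²) dz) dy for continuous positive σ and r,c>0, the derivative satisfies φ'(x₀) = exp(-∫_c^{x₀} 2r/(zσ(z)²) dz) · ∫_{x₀}^∞ y^{-2}(exp(-∫_{x₀}^y 2r/(zσ(z)²) dz) − 1) dy, and in particular φ'(x₀) < 0. -/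
/-! Write `k y = exp (-∫_c^y g)` with `g z = 2r / (z σ(z)²)`, so that `φ x = x ∫_x^∞ k(y) / y² dy`.
Differentiating under the tail integral gives `φ'(x₀) = ∫_{x₀}^∞ k(y)/y² dy - k(x₀)/x₀`, and since
`∫_{x₀}^∞ dy / y² = 1 / x₀` this is `∫_{x₀}^∞ (k(y) - k(x₀)) / y² dy`. Additivity of `∫ g` factors
`k(y) = k(x₀) exp (-∫_{x₀}^y g)`, and as `g > 0` the function `k` is strictly decreasing, so the
integrand is negative. -/

open MeasureTheory intervalIntegral Set Filter Topology

theorem setIntegral_neg_of_neg_on {X : Type*} [MeasurableSpace X] {μ : Measure X} {s : Set X}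
    {f : X → ℝ} (hs : MeasurableSet s) (hμs : μ s ≠ 0) (hf : IntegrableOn f s μ)
    (hneg : ∀ x ∈ s, f x < 0) : ∫ x in s, f x ∂μ < 0 := by
  have hsupp : (Function.support fun x => -f x) ∩ s = s :=
    inter_eq_right.2 fun x hx => neg_ne_zero.2 (hneg x hx).ne
  have hpos : 0 < ∫ x in s, -f x ∂μ :=
    (setIntegral_pos_iff_support_of_nonneg_ae
      (ae_restrict_of_forall_mem hs fun x hx => neg_nonneg.2 (hneg x hx).le) hf.neg).2
      (by rwa [hsupp, pos_iff_ne_zero])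
  simpa [MeasureTheory.integral_neg] using hpos

theorem hasDerivAt_setIntegral_Ioi {E : Type*} [NormedAddCommGroup E] [NormedSpace ℝ E]
    [CompleteSpace E] {f : ℝ → E} {a x : ℝ} (hf : IntegrableOn f (Ioi a)) (hax : a < x)
    (hfx : ContinuousAt f x) : HasDerivAt (fun u => ∫ y in Ioi u, f y) (-f x) x := by
  have hsplit : (fun u => ∫ y in Ioi u, f y) =ᶠ[𝓝 x]
      fun u => (∫ y in Ioi a, f y) - ∫ y in a..u, f y := by
    filter_upwards [Ioi_mem_nhds hax] with u hu
    have h := setIntegral_union (Ioc_disjoint_Ioi le_rfl) measurableSet_Ioi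
      (hf.mono_set Ioc_subset_Ioi_self) (hf.mono_set (Ioi_subset_Ioi hu.le))
    rw [Ioc_union_Ioi_eq_Ioi hu.le] at h
    rw [h, integral_of_le hu.le, add_sub_cancel_left]
  have hprim : HasDerivAt (fun u => ∫ y in a..u, f y) (f x) x :=
    integral_hasDerivAt_right
      ((intervalIntegrable_iff_integrableOn_Ioc_of_le hax.le).2 (hf.mono_set Ioc_subset_Ioi_self))
      (AEStronglyMeasurable.stronglyMeasurableAtFilter_of_mem hf.1 (Ioi_mem_nhds hax)) hfx
  simpa using (hprim.const_sub _).congr_of_eventuallyEq hsplit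

theorem one_div_sq_eqOn_rpow : EqOn (fun y : ℝ => 1 / y ^ 2) (fun y => y ^ (-2 : ℝ)) (Ioi 0) :=
  fun y hy => by
    dsimp only
    rw [show (-2 : ℝ) = -(2 : ℕ) by norm_num, Real.rpow_neg (le_of_lt hy), Real.rpow_natCast,
      one_div]

theorem integrableOn_Ioi_one_div_sq {x : ℝ} (hx : 0 < x) :
    IntegrableOn (fun y : ℝ => 1 / y ^ 2) (Ioi x) :=
  (integrableOn_Ioi_rpow_of_lt (by norm_num) hx).congr_fun
    (fun y hy => (one_div_sq_eqOn_rpow (hx.trans hy)).symm) measurableSet_Ioi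

theorem integral_Ioi_one_div_sq {x : ℝ} (hx : 0 < x) : ∫ y in Ioi x, 1 / y ^ 2 = 1 / x := by
  rw [setIntegral_congr_fun measurableSet_Ioi fun y hy => one_div_sq_eqOn_rpow (hx.trans hy),
    integral_Ioi_rpow_of_lt (by norm_num) hx]
  norm_num [Real.rpow_neg_one]

section InverseSquareWeight

variable {k : ℝ → ℝ} {x : ℝ}

theorem integrableOn_Ioi_one_div_sq_mul_sub (hx : 0 < x)
    (hk : IntegrableOn (fun y => 1 / y ^ 2 * k y) (Ioi x)) :
    IntegrableOn (fun y => 1 / y ^ 2 * (k y - k x)) (Ioi x) := by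
  have h := hk.sub ((integrableOn_Ioi_one_div_sq hx).mul_const (k x))
  simpa only [mul_sub, Pi.sub_def] using h

theorem integral_Ioi_one_div_sq_mul_sub (hx : 0 < x)
    (hk : IntegrableOn (fun y => 1 / y ^ 2 * k y) (Ioi x)) :
    ∫ y in Ioi x, 1 / y ^ 2 * (k y - k x) =
      (∫ y in Ioi x, 1 / y ^ 2 * k y) - x * (1 / x ^ 2 * k x) := by
  simp only [mul_sub]
  rw [integral_sub hk ((integrableOn_Ioi_one_div_sq hx).mul_const (k x)), MeasureTheory.integral_mul_const,
    integral_Ioi_one_div_sq hx]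
  field_simp

theorem hasDerivAt_mul_integral_Ioi_one_div_sq_mul {a : ℝ} (hx : 0 < x) (hax : a < x)
    (hk : IntegrableOn (fun y => 1 / y ^ 2 * k y) (Ioi a)) (hkx : ContinuousAt k x) :
    HasDerivAt (fun u => u * ∫ y in Ioi u, 1 / y ^ 2 * k y)
      (∫ y in Ioi x, 1 / y ^ 2 * (k y - k x)) x := by
  have hcont : ContinuousAt (fun y => 1 / y ^ 2 * k y) x :=
    (continuousAt_const.div (continuousAt_id.pow 2) (pow_pos hx 2).ne').mul hkx
  rw [integral_Ioi_one_div_sq_mul_sub hx (hk.mono_set (Ioi_subset_Ioi hax.le))]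
  exact ((hasDerivAt_id' x).mul (hasDerivAt_setIntegral_Ioi hk hax hcont)).congr_deriv (by ring)

end InverseSquareWeight

section ExpNegIntegral

variable {g : ℝ → ℝ} {c x y : ℝ}

theorem ContinuousOn.intervalIntegrable_of_mem_Ioi {b : ℝ} (hg : ContinuousOn g (Ioi b))
    (hx : b < x) (hy : b < y) : IntervalIntegrable g volume x y :=
  (hg.mono (ordConnected_Ioi.uIcc_subset hx hy)).intervalIntegrable

theorem continuousAt_exp_neg_integral (hg : ContinuousOn g (Ioi 0)) (hc : 0 < c) (hx : 0 < x) :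
    ContinuousAt (fun y => Real.exp (-∫ z in c..y, g z)) x :=
  (integral_hasDerivAt_right (hg.intervalIntegrable_of_mem_Ioi hc hx)
    (hg.stronglyMeasurableAtFilter isOpen_Ioi x hx)
    (hg.continuousAt (Ioi_mem_nhds hx))).continuousAt.neg.rexp

theorem exp_neg_integral_eq_mul (hg : ContinuousOn g (Ioi 0)) (hc : 0 < c) (hx : 0 < x)
    (hy : 0 < y) :
    Real.exp (-∫ z in c..y, g z) =
      Real.exp (-∫ z in c..x, g z) * Real.exp (-∫ z in x..y, g z) := by
  rw [← integral_add_adjacent_intervals (hg.intervalIntegrable_of_mem_Ioi hc hx)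
    (hg.intervalIntegrable_of_mem_Ioi hx hy), neg_add, Real.exp_add]

theorem strictAntiOn_exp_neg_integral (hg : ContinuousOn g (Ioi 0))
    (hgpos : ∀ z ∈ Ioi (0 : ℝ), 0 < g z) (hc : 0 < c) :
    StrictAntiOn (fun y => Real.exp (-∫ z in c..y, g z)) (Ioi 0) := by
  intro x hx y hy hxy
  have hpos : 0 < ∫ z in x..y, g z :=
    intervalIntegral_pos_of_pos_on (hg.intervalIntegrable_of_mem_Ioi hx hy)
      (fun z hz => hgpos z (lt_trans hx hz.1)) hxy
  simp only [Real.exp_lt_exp, neg_lt_neg_iff]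
  rw [← integral_add_adjacent_intervals (hg.intervalIntegrable_of_mem_Ioi hc hx)
    (hg.intervalIntegrable_of_mem_Ioi hx hy)]
  linarith

end ExpNegIntegral

theorem stmt_8 (σ : ℝ → ℝ) (r c x₀ : ℝ) (hr : 0 < r) (hc : 0 < c)
    (hx₀ : 0 < x₀)
    (hσpos : ∀ x > (0:ℝ), 0 < σ x)
    (hσcont : ContinuousOn σ (Set.Ioi 0))
    (φ : ℝ → ℝ)
    (hφ : ∀ x > (0:ℝ), φ x =
      x * ∫ y in Set.Ioi x, (1 / y ^ 2) *
        Real.exp (-(∫ z in c..y, 2 * r / (z * σ z ^ 2))))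
    (hint : ∀ x > (0:ℝ), IntegrableOn
      (fun y => (1 / y ^ 2) *
        Real.exp (-(∫ z in c..y, 2 * r / (z * σ z ^ 2)))) (Set.Ioi x)) :
    deriv φ x₀ =
      Real.exp (-(∫ z in c..x₀, 2 * r / (z * σ z ^ 2))) *
        ∫ y in Set.Ioi x₀, (1 / y ^ 2) *
          (Real.exp (-(∫ z in x₀..y, 2 * r / (z * σ z ^ 2))) - 1)
    ∧ deriv φ x₀ < 0 := by
  have hg : ContinuousOn (fun z => 2 * r / (z * σ z ^ 2)) (Ioi 0) :=
    continuousOn_const.div (continuousOn_id.mul (hσcont.pow 2))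
      fun z hz => (mul_pos hz (pow_pos (hσpos z hz) 2)).ne'
  have hgpos : ∀ z ∈ Ioi (0 : ℝ), 0 < 2 * r / (z * σ z ^ 2) :=
    fun z hz => div_pos (by positivity) (mul_pos hz (pow_pos (hσpos z hz) 2))
  have hderiv : deriv φ x₀ = ∫ y in Ioi x₀, 1 / y ^ 2 *
      (Real.exp (-∫ z in c..y, 2 * r / (z * σ z ^ 2)) -
        Real.exp (-∫ z in c..x₀, 2 * r / (z * σ z ^ 2))) :=
    ((hasDerivAt_mul_integral_Ioi_one_div_sq_mul hx₀ (half_lt_self hx₀) (hint _ (half_pos hx₀))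
      (continuousAt_exp_neg_integral hg hc hx₀)).congr_of_eventuallyEq
      (eventually_of_mem (Ioi_mem_nhds hx₀) hφ)).deriv
  refine ⟨?_, ?_⟩
  · rw [hderiv, ← MeasureTheory.integral_const_mul]
    refine setIntegral_congr_fun measurableSet_Ioi fun y hy => ?_
    rw [exp_neg_integral_eq_mul hg hc hx₀ (hx₀.trans hy)]
    ring
  · rw [hderiv]
    exact setIntegral_neg_of_neg_on measurableSet_Ioi (by simp)
      (integrableOn_Ioi_one_div_sq_mul_sub hx₀ (hint x₀ hx₀)) fun y hy =>
        mul_neg_of_pos_of_neg (one_div_pos.2 (pow_pos (hx₀.trans hy) 2))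
          (sub_neg.2 (strictAntiOn_exp_neg_integral hg hgpos hc hx₀ (hx₀.trans hy) hy))
end

section
/- Let φ:(0,x₀]→(0,∞) be convex and strictly decreasing with φ(x₀)=1, twice continuously differentiable with φ''>0 on (0,x₀), and φ'(x₀)<0. Define P(K)=sup_{z≤x₀}(K-z)/φ(z). Then P is continuously differentiable on (0, K̂) where K̂ = x₀ − 1/φ'(x₀), and for K<K̂ one has P'(K) = 1/φ(z(K)), where z(K)∈(0,x₀) is the unique point satisfying (K−z)φ'(z)+φ(z)=0. -/
/-!
Write `T_w` for the tangent line of `φ` at `w`; the first-order condition says `T_{z(K)}(K) = 0`.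
Since the convex `φ` lies above `T_{z(K)}`, this rearranges to
`(K - w) / φ w ≤ (K - z(K)) / φ (z(K))` on `(0, x₀]`. Hence `P` is the upper envelope of the
affine functions `K ↦ (K - w) / φ w`, attained at `w = z(K)`, and such an envelope has derivative
`1 / φ (z(K))`, the slope of the maximizing line, as soon as this slope is continuous in `K`.
Continuity of `z` comes from strict convexity: `w ↦ T_w(K)` increases strictly on `w < K` and is
positive for `w ≥ K`, so its sign changes exactly at `z(K)`, and a sign change at a fixed `w`
persists for nearby `K`.
-/

open Set Filter Topology

noncomputable def tangentLine (φ : ℝ → ℝ) (w x : ℝ) : ℝ := (x - w) * deriv φ w + φ w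

theorem continuous_tangentLine (φ : ℝ → ℝ) (w : ℝ) : Continuous (tangentLine φ w) := by
  unfold tangentLine
  fun_prop

section TangentLine

variable {φ : ℝ → ℝ} {s : Set ℝ} {c w x K : ℝ}

theorem ConvexOn.tangentLine_le (hφ : ConvexOn ℝ s φ) (hw : w ∈ s) (hx : x ∈ s)
    (hd : DifferentiableAt ℝ φ w) : tangentLine φ w x ≤ φ x := by
  unfold tangentLine
  rcases lt_trichotomy w x with hwx | rfl | hxw
  · have h := hφ.deriv_le_slope hw hx hwx hd
    rw [slope_def_field, le_div_iff₀ (sub_pos.2 hwx)] at h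
    linarith
  · simp
  · have h := hφ.slope_le_deriv hx hw hxw hd
    rw [slope_def_field, div_le_iff₀ (sub_pos.2 hxw)] at h
    linarith

theorem tangentLine_pos_of_le (hpos : 0 < φ w) (hφ' : deriv φ w ≤ 0)
    (hKw : K ≤ w) : 0 < tangentLine φ w K := by
  unfold tangentLine
  nlinarith

theorem lt_of_tangentLine_eq_zero (hpos : 0 < φ c) (hφ' : deriv φ c ≤ 0)
    (hT : tangentLine φ c K = 0) : c < K :=
  not_le.1 fun h => (tangentLine_pos_of_le hpos hφ' h).ne' hT

theorem StrictConvexOn.strictMonoOn_tangentLine (hφ : StrictConvexOn ℝ s φ)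
    (hd : ∀ w ∈ s, DifferentiableAt ℝ φ w) (x : ℝ) :
    StrictMonoOn (fun w => tangentLine φ w x) (s ∩ Iio x) := by
  intro w₁ h₁ w₂ h₂ hlt
  have hT := hφ.convexOn.tangentLine_le h₁.1 h₂.1 (hd w₁ h₁.1)
  have hslope : 0 < (x - w₂) * (deriv φ w₂ - deriv φ w₁) :=
    mul_pos (sub_pos.2 h₂.2) (sub_pos.2 (hφ.strictMonoOn_deriv hd h₁.1 h₂.1 hlt))
  simp only [tangentLine] at hT ⊢
  nlinarith

theorem StrictConvexOn.tangentLine_neg_of_lt (hφ : StrictConvexOn ℝ s φ)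
    (hd : ∀ w ∈ s, DifferentiableAt ℝ φ w) (hφ' : ∀ w ∈ s, deriv φ w ≤ 0)
    (hpos : ∀ w ∈ s, 0 < φ w) (hc : c ∈ s) (hT : tangentLine φ c K = 0) (hw : w ∈ s)
    (hwc : w < c) : tangentLine φ w K < 0 := by
  have hcK := lt_of_tangentLine_eq_zero (hpos c hc) (hφ' c hc) hT
  exact hT ▸ hφ.strictMonoOn_tangentLine hd K ⟨hw, hwc.trans hcK⟩ ⟨hc, hcK⟩ hwc

theorem StrictConvexOn.tangentLine_pos_of_gt (hφ : StrictConvexOn ℝ s φ)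
    (hd : ∀ w ∈ s, DifferentiableAt ℝ φ w) (hφ' : ∀ w ∈ s, deriv φ w ≤ 0)
    (hpos : ∀ w ∈ s, 0 < φ w) (hc : c ∈ s) (hT : tangentLine φ c K = 0) (hw : w ∈ s)
    (hcw : c < w) : 0 < tangentLine φ w K := by
  rcases lt_or_ge w K with hwK | hKw
  · exact hT ▸ hφ.strictMonoOn_tangentLine hd K ⟨hc, hcw.trans hwK⟩ ⟨hw, hwK⟩ hcw
  · exact tangentLine_pos_of_le (hpos w hw) (hφ' w hw) hKw

theorem StrictConvexOn.tangentLine_neg_iff (hφ : StrictConvexOn ℝ s φ)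
    (hd : ∀ w ∈ s, DifferentiableAt ℝ φ w) (hφ' : ∀ w ∈ s, deriv φ w ≤ 0)
    (hpos : ∀ w ∈ s, 0 < φ w) (hc : c ∈ s) (hT : tangentLine φ c K = 0) (hw : w ∈ s) :
    tangentLine φ w K < 0 ↔ w < c := by
  refine ⟨fun hneg => ?_, hφ.tangentLine_neg_of_lt hd hφ' hpos hc hT hw⟩
  rcases lt_trichotomy w c with hwc | rfl | hcw
  · exact hwc
  · exact absurd hT hneg.ne
  · exact absurd (hφ.tangentLine_pos_of_gt hd hφ' hpos hc hT hw hcw) hneg.not_gt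

theorem StrictConvexOn.tangentLine_pos_iff (hφ : StrictConvexOn ℝ s φ)
    (hd : ∀ w ∈ s, DifferentiableAt ℝ φ w) (hφ' : ∀ w ∈ s, deriv φ w ≤ 0)
    (hpos : ∀ w ∈ s, 0 < φ w) (hc : c ∈ s) (hT : tangentLine φ c K = 0) (hw : w ∈ s) :
    0 < tangentLine φ w K ↔ c < w := by
  refine ⟨fun hTpos => ?_, hφ.tangentLine_pos_of_gt hd hφ' hpos hc hT hw⟩
  rcases lt_trichotomy w c with hwc | rfl | hcw
  · exact absurd (hφ.tangentLine_neg_of_lt hd hφ' hpos hc hT hw hwc) hTpos.not_gt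
  · exact absurd hT hTpos.ne'
  · exact hcw

theorem StrictConvexOn.continuousAt_of_tangentLine_eq_zero {z : ℝ → ℝ} {a b K₀ : ℝ}
    (hφ : StrictConvexOn ℝ (Ioo a b) φ) (hd : ∀ w ∈ Ioo a b, DifferentiableAt ℝ φ w)
    (hφ' : ∀ w ∈ Ioo a b, deriv φ w ≤ 0) (hpos : ∀ w ∈ Ioo a b, 0 < φ w)
    (hz : ∀ᶠ K in 𝓝 K₀, z K ∈ Ioo a b ∧ tangentLine φ (z K) K = 0) :
    ContinuousAt z K₀ := by
  obtain ⟨hc, hT⟩ := hz.self_of_nhds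
  refine tendsto_order.2 ⟨fun l hl => ?_, fun u hu => ?_⟩
  · obtain ⟨w, hlw, hwc⟩ := exists_between (max_lt hl hc.1)
    have hw : w ∈ Ioo a b := ⟨(le_max_right l a).trans_lt hlw, hwc.trans hc.2⟩
    have hneg := (hφ.tangentLine_neg_iff hd hφ' hpos hc hT hw).2 hwc
    filter_upwards [hz, (continuous_tangentLine φ w).continuousAt.eventually_lt_const hneg]
      with K ⟨hzK, hTK⟩ hnegK
    exact ((le_max_left l a).trans_lt hlw).trans
      ((hφ.tangentLine_neg_iff hd hφ' hpos hzK hTK hw).1 hnegK)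
  · obtain ⟨w, hcw, hwu⟩ := exists_between (lt_min hu hc.2)
    have hw : w ∈ Ioo a b := ⟨hc.1.trans hcw, hwu.trans_le (min_le_right u b)⟩
    have hpos' := (hφ.tangentLine_pos_iff hd hφ' hpos hc hT hw).2 hcw
    filter_upwards [hz, (continuous_tangentLine φ w).continuousAt.eventually_const_lt hpos']
      with K ⟨hzK, hTK⟩ hposK
    exact ((hφ.tangentLine_pos_iff hd hφ' hpos hzK hTK hw).1 hposK).trans
      (hwu.trans_le (min_le_left u b))

theorem ConvexOn.div_le_div_of_tangentLine_eq_zero (hφ : ConvexOn ℝ s φ)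
    (hpos : ∀ w ∈ s, 0 < φ w) (hc : c ∈ s) (hd : DifferentiableAt ℝ φ c)
    (hcK : c < K) (hT : tangentLine φ c K = 0) (hw : w ∈ s) :
    (K - w) / φ w ≤ (K - c) / φ c := by
  have htan := hφ.tangentLine_le hc hw hd
  unfold tangentLine at hT htan
  rw [div_le_div_iff₀ (hpos w hw) (hpos c hc)]
  have hT' : (w - c) * ((K - c) * deriv φ c + φ c) = 0 := by rw [hT, mul_zero]
  linarith [mul_le_mul_of_nonneg_left htan (sub_pos.2 hcK).le]

end TangentLine

theorem hasDerivAt_affine_envelope {α : Type*} {s : Set α} {a b : α → ℝ} {P : ℝ → ℝ}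
    {z : ℝ → α} {K₀ : ℝ} (hle : ∀ᶠ K in 𝓝 K₀, ∀ w ∈ s, K * a w + b w ≤ P K)
    (hz : ∀ᶠ K in 𝓝 K₀, z K ∈ s ∧ P K = K * a (z K) + b (z K))
    (ha : ContinuousAt (fun K => a (z K)) K₀) : HasDerivAt P (a (z K₀)) K₀ := by
  obtain ⟨hzK₀, hPK₀⟩ := hz.self_of_nhds
  rw [hasDerivAt_iff_isLittleO, Asymptotics.isLittleO_iff]
  intro ε hε
  have hclose : ∀ᶠ K in 𝓝 K₀, |a (z K) - a (z K₀)| ≤ ε :=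
    ha.eventually (Metric.closedBall_mem_nhds _ hε)
  filter_upwards [hle, hz, hclose] with K hleK ⟨hzK, hPK⟩ hcloseK
  have hlower : 0 ≤ P K - P K₀ - (K - K₀) * a (z K₀) := by
    linarith [hleK _ hzK₀]
  have hupper : P K - P K₀ - (K - K₀) * a (z K₀) ≤ (K - K₀) * (a (z K) - a (z K₀)) := by
    linarith [hle.self_of_nhds _ hzK]
  rw [smul_eq_mul, Real.norm_of_nonneg hlower, Real.norm_eq_abs]
  calc P K - P K₀ - (K - K₀) * a (z K₀)
      ≤ |K - K₀| * |a (z K) - a (z K₀)| := hupper.trans ((le_abs_self _).trans (abs_mul _ _).le)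
    _ = |a (z K) - a (z K₀)| * |K - K₀| := mul_comm _ _
    _ ≤ ε * |K - K₀| := by gcongr

theorem hasDerivAt_sSup_div {φ P z : ℝ → ℝ} {s : Set ℝ} {K₀ : ℝ}
    (hP : ∀ᶠ K in 𝓝 K₀, P K = sSup ((fun w => (K - w) / φ w) '' s))
    (hz : ∀ᶠ K in 𝓝 K₀, z K ∈ s ∧ ∀ w ∈ s, (K - w) / φ w ≤ (K - z K) / φ (z K))
    (hcont : ContinuousAt (fun K => 1 / φ (z K)) K₀) : HasDerivAt P (1 / φ (z K₀)) K₀ := by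
  have hPz : ∀ᶠ K in 𝓝 K₀, z K ∈ s ∧ P K = (K - z K) / φ (z K) := by
    filter_upwards [hP, hz] with K hPK ⟨hzK, hmax⟩
    refine ⟨hzK, hPK.trans (IsGreatest.csSup_eq ⟨⟨z K, hzK, rfl⟩, ?_⟩)⟩
    rintro _ ⟨w, hw, rfl⟩
    exact hmax w hw
  refine hasDerivAt_affine_envelope (s := s) (a := fun w => 1 / φ w) (b := fun w => -w / φ w)
    ?_ ?_ hcont
  · filter_upwards [hPz, hz] with K ⟨_, hPK⟩ ⟨_, hmax⟩ w hw
    rw [hPK]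
    convert hmax w hw using 1
    ring
  · filter_upwards [hPz] with K ⟨hzK, hPK⟩
    exact ⟨hzK, by rw [hPK]; ring⟩

theorem contDiffOn_one_of_hasDerivAt {f f' : ℝ → ℝ} {s : Set ℝ} (hs : IsOpen s)
    (hf : ∀ x ∈ s, HasDerivAt f (f' x) x) (hf' : ContinuousOn f' s) : ContDiffOn ℝ 1 f s := by
  rw [show (1 : WithTop ℕ∞) = 0 + 1 from rfl, contDiffOn_succ_iff_deriv_of_isOpen hs]
  refine ⟨fun x hx => (hf x hx).differentiableAt.differentiableWithinAt, by simp, ?_⟩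
  exact contDiffOn_zero.2 (hf'.congr fun x hx => (hf x hx).deriv)

theorem stmt_9_general (x₀ : ℝ) (φ P z : ℝ → ℝ)
    (hC2 : ContDiffOn ℝ 2 φ (Set.Ioo 0 x₀))
    (hφ'' : ∀ x ∈ Set.Ioo (0:ℝ) x₀, 0 < deriv (deriv φ) x)
    (hdec : StrictAntiOn φ (Set.Ioc 0 x₀))
    (hconv : ConvexOn ℝ (Set.Ioc 0 x₀) φ)
    (hφx₀ : φ x₀ = 1)
    (hP : ∀ K > (0:ℝ),
      P K = sSup ((fun w => (K - w) / φ w) '' Set.Ioc 0 x₀))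
    (hz : ∀ K ∈ Set.Ioo (0:ℝ) (x₀ - 1 / deriv φ x₀),
      z K ∈ Set.Ioo 0 x₀ ∧ (K - z K) * deriv φ (z K) + φ (z K) = 0) :
    ContDiffOn ℝ 1 P (Set.Ioo 0 (x₀ - 1 / deriv φ x₀)) ∧
    ∀ K ∈ Set.Ioo (0:ℝ) (x₀ - 1 / deriv φ x₀),
      HasDerivAt P (1 / φ (z K)) K := by
  set U := Ioo (0:ℝ) (x₀ - 1 / deriv φ x₀)
  have hpos : ∀ w ∈ Ioc 0 x₀, 0 < φ w := fun w hw => by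
    linarith [hdec.antitoneOn hw ⟨hw.1.trans_le hw.2, le_rfl⟩ hw.2]
  have hpos' : ∀ w ∈ Ioo 0 x₀, 0 < φ w := fun w hw => hpos w (Ioo_subset_Ioc_self hw)
  have hd : ∀ w ∈ Ioo 0 x₀, DifferentiableAt ℝ φ w := fun w hw =>
    (hC2.contDiffAt (isOpen_Ioo.mem_nhds hw)).differentiableAt (by norm_num)
  have hφ' : ∀ w ∈ Ioo 0 x₀, deriv φ w ≤ 0 := fun w hw => by
    rw [← derivWithin_of_isOpen isOpen_Ioo hw]
    exact (hdec.antitoneOn.mono Ioo_subset_Ioc_self).derivWithin_nonpos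
  have hsc : StrictConvexOn ℝ (Ioo 0 x₀) φ :=
    strictConvexOn_of_deriv2_pos (convex_Ioo 0 x₀) hC2.continuousOn
      (fun x hx => hφ'' x (by rwa [interior_Ioo] at hx))
  have hmax (K : ℝ) (hK : K ∈ U) :
      z K ∈ Ioc 0 x₀ ∧ ∀ w ∈ Ioc 0 x₀, (K - w) / φ w ≤ (K - z K) / φ (z K) :=
    have ⟨hzK, hT⟩ := hz K hK
    ⟨Ioo_subset_Ioc_self hzK, fun w hw => hconv.div_le_div_of_tangentLine_eq_zero hpos
      (Ioo_subset_Ioc_self hzK) (hd _ hzK)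
      (lt_of_tangentLine_eq_zero (hpos' _ hzK) (hφ' _ hzK) hT) hT hw⟩
  have hinv (K : ℝ) (hK : K ∈ U) : ContinuousAt (fun K => 1 / φ (z K)) K :=
    have hzK := (hz K hK).1
    (continuousAt_const.div (hd _ hzK).continuousAt (hpos' _ hzK).ne').comp
      (hsc.continuousAt_of_tangentLine_eq_zero hd hφ' hpos'
        (eventually_of_mem (isOpen_Ioo.mem_nhds hK) hz))
  have hderiv (K : ℝ) (hK : K ∈ U) : HasDerivAt P (1 / φ (z K)) K :=
    hasDerivAt_sSup_div (eventually_of_mem (isOpen_Ioo.mem_nhds hK) fun K hK => hP K hK.1)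
      (eventually_of_mem (isOpen_Ioo.mem_nhds hK) hmax) (hinv K hK)
  exact ⟨contDiffOn_one_of_hasDerivAt isOpen_Ioo hderiv
    (continuousOn_of_forall_continuousAt hinv), hderiv⟩

theorem stmt_9 (x₀ : ℝ) (hx₀ : 0 < x₀) (φ P z : ℝ → ℝ)
    (hC2 : ContDiffOn ℝ 2 φ (Set.Ioo 0 x₀))
    (hφ'' : ∀ x ∈ Set.Ioo (0:ℝ) x₀, 0 < deriv (deriv φ) x)
    (hdec : StrictAntiOn φ (Set.Ioc 0 x₀))
    (hconv : ConvexOn ℝ (Set.Ioc 0 x₀) φ)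
    (hφx₀ : φ x₀ = 1)
    (hφ'x₀ : deriv φ x₀ < 0)
    (hP : ∀ K > (0:ℝ),
      P K = sSup ((fun w => (K - w) / φ w) '' Set.Ioc 0 x₀))
    (hz : ∀ K ∈ Set.Ioo (0:ℝ) (x₀ - 1 / deriv φ x₀),
      z K ∈ Set.Ioo 0 x₀ ∧ (K - z K) * deriv φ (z K) + φ (z K) = 0)
    (hzuniq : ∀ K ∈ Set.Ioo (0:ℝ) (x₀ - 1 / deriv φ x₀),
      ∀ w ∈ Set.Ioo (0:ℝ) x₀,
        (K - w) * deriv φ w + φ w = 0 → w = z K) :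
    ContDiffOn ℝ 1 P (Set.Ioo 0 (x₀ - 1 / deriv φ x₀)) ∧
    ∀ K ∈ Set.Ioo (0:ℝ) (x₀ - 1 / deriv φ x₀),
      HasDerivAt P (1 / φ (z K)) K :=
  stmt_9_general x₀ φ P z hC2 hφ'' hdec hconv hφx₀ hP hz
end

section
/- In the setting of the previous statement, for K < K̂ the second derivative of P is P''(K) = (φ'(z(K)))² / ((K−z(K))·φ(z(K))²·φ''(z(K))), and in particular P''(K)>0 on (0,K̂). -/
/-!
Let `g w = w - φ w / φ' w` be the point where the tangent to `φ` at `w` meets the axis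
(`tangentRoot`). The defining equation of `z` says exactly `g (z K) = K`, and
`g' = φ φ'' / φ'² > 0`, so `z` is the inverse of a strictly increasing differentiable map and
`z' = φ'² / (φ φ'')` at `z`. Differentiating `P = (K - z) / φ(z)`, the terms carrying `z'` cancel
by the tangent equation, leaving `P' = 1 / φ(z)`; one more derivative gives
`P'' = -φ'(z) z' / φ(z)²`, which is the stated formula once `K - z = -φ(z) / φ'(z)`.
-/

open Set Filter Topology

theorem StrictMonoOn.continuousAt_of_local_left_inverse {α β : Type*} [LinearOrder α]
    [TopologicalSpace α] [OrderTopology α] [DenselyOrdered α] [LinearOrder β]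
    [TopologicalSpace β] [OrderTopology β] {g : α → β} {z : β → α} {s : Set α} {b : β}
    (hg : StrictMonoOn g s) (hgc : ContinuousAt g (z b)) (hs : s ∈ 𝓝 (z b))
    (hz : ∀ᶠ y in 𝓝 b, z y ∈ s ∧ g (z y) = y) : ContinuousAt z b := by
  have hz_mono : StrictMonoOn z {y | z y ∈ s ∧ g (z y) = y} := fun y hy y' hy' hlt => by
    by_contra! hle
    have hgle := hg.monotoneOn hy'.1 hy.1 hle
    rw [hy.2, hy'.2] at hgle
    exact hlt.not_ge hgle
  refine hz_mono.continuousAt_of_image_mem_nhds hz ?_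
  have hgb : {y | z y ∈ s ∧ g (z y) = y} ∈ 𝓝 (g (z b)) := by rwa [hz.self_of_nhds.2]
  filter_upwards [hs, hgc.preimage_mem_nhds hgb] with w hws hw
  exact ⟨g w, hw, hg.injOn hw.1 hws hw.2⟩

theorem ContDiffOn.hasDerivAt_and_hasDerivAt_deriv {φ : ℝ → ℝ} {s : Set ℝ} {x : ℝ}
    (hφ : ContDiffOn ℝ 2 φ s) (hs : IsOpen s) (hx : x ∈ s) :
    HasDerivAt φ (deriv φ x) x ∧ HasDerivAt (deriv φ) (deriv (deriv φ) x) x :=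
  ⟨((hφ.differentiableOn (by norm_num)).differentiableAt (hs.mem_nhds hx)).hasDerivAt,
    (((hφ.deriv_of_isOpen hs (by norm_num : (1 : WithTop ℕ∞) + 1 ≤ 2)).differentiableOn
      (by norm_num)).differentiableAt (hs.mem_nhds hx)).hasDerivAt⟩

theorem strictMonoOn_of_hasDerivAt_pos {f f' : ℝ → ℝ} {s : Set ℝ} (hs : IsOpen s)
    (hs' : Convex ℝ s) (hf : ∀ x ∈ s, HasDerivAt f (f' x) x) (hf' : ∀ x ∈ s, 0 < f' x) :
    StrictMonoOn f s :=
  strictMonoOn_of_hasDerivWithinAt_pos hs'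
    (fun x hx => (hf x hx).continuousAt.continuousWithinAt)
    (fun x hx => (hf x (hs.interior_eq ▸ hx)).hasDerivWithinAt)
    (fun x hx => hf' x (hs.interior_eq ▸ hx))

theorem deriv_neg_of_antitoneOn_of_strictMonoOn_deriv {φ : ℝ → ℝ} {a b x : ℝ}
    (hφ : AntitoneOn φ (Ioo a b)) (hφ' : StrictMonoOn (deriv φ) (Ioo a b)) (hx : x ∈ Ioo a b) :
    deriv φ x < 0 := by
  have hy : (x + b) / 2 ∈ Ioo a b := ⟨by linarith [hx.1, hx.2], by linarith [hx.2]⟩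
  calc deriv φ x < deriv φ ((x + b) / 2) := hφ' hx hy (by linarith [hx.2])
    _ = derivWithin φ (Ioo a b) ((x + b) / 2) :=
        (derivWithin_of_mem_nhds (isOpen_Ioo.mem_nhds hy)).symm
    _ ≤ 0 := hφ.derivWithin_nonpos

noncomputable def tangentRoot (φ : ℝ → ℝ) (w : ℝ) : ℝ := w - φ w / deriv φ w

theorem tangentRoot_eq_of_tangent_eq_zero {φ : ℝ → ℝ} {w K : ℝ} (hφ' : deriv φ w ≠ 0)
    (h : (K - w) * deriv φ w + φ w = 0) : tangentRoot φ w = K := by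
  rw [tangentRoot]
  field_simp
  linear_combination -h

theorem hasDerivAt_tangentRoot {φ : ℝ → ℝ} {w : ℝ} (hφ : HasDerivAt φ (deriv φ w) w)
    (hφ' : HasDerivAt (deriv φ) (deriv (deriv φ) w) w) (hne : deriv φ w ≠ 0) :
    HasDerivAt (tangentRoot φ) (φ w * deriv (deriv φ) w / deriv φ w ^ 2) w := by
  refine ((hasDerivAt_id w).sub (hφ.div hφ' hne)).congr_deriv ?_
  field_simp
  ring

theorem hasDerivAt_of_tangent_eq_zero {φ z : ℝ → ℝ} {s : Set ℝ} {K : ℝ}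
    (hs : IsOpen s) (hs' : Convex ℝ s) (hC2 : ContDiffOn ℝ 2 φ s)
    (hφ : ∀ x ∈ s, 0 < φ x) (hφ' : ∀ x ∈ s, deriv φ x ≠ 0)
    (hφ'' : ∀ x ∈ s, 0 < deriv (deriv φ) x)
    (hz : ∀ᶠ k in 𝓝 K, z k ∈ s ∧ (k - z k) * deriv φ (z k) + φ (z k) = 0) :
    HasDerivAt z (deriv φ (z K) ^ 2 / (φ (z K) * deriv (deriv φ) (z K))) K := by
  have hg : ∀ x ∈ s, HasDerivAt (tangentRoot φ) (φ x * deriv (deriv φ) x / deriv φ x ^ 2) x :=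
    fun x hx => hasDerivAt_tangentRoot (hC2.hasDerivAt_and_hasDerivAt_deriv hs hx).1
      (hC2.hasDerivAt_and_hasDerivAt_deriv hs hx).2 (hφ' x hx)
  have hg_pos : ∀ x ∈ s, 0 < φ x * deriv (deriv φ) x / deriv φ x ^ 2 := fun x hx =>
    div_pos (mul_pos (hφ x hx) (hφ'' x hx)) (sq_pos_of_ne_zero (hφ' x hx))
  have hg_mono : StrictMonoOn (tangentRoot φ) s := strictMonoOn_of_hasDerivAt_pos hs hs' hg hg_pos
  have hz' : ∀ᶠ k in 𝓝 K, z k ∈ s ∧ tangentRoot φ (z k) = k := hz.mono fun k hk =>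
    ⟨hk.1, tangentRoot_eq_of_tangent_eq_zero (hφ' _ hk.1) hk.2⟩
  have hzK := hz.self_of_nhds.1
  have hzd := (hg _ hzK).of_local_left_inverse
    (hg_mono.continuousAt_of_local_left_inverse (hg _ hzK).continuousAt (hs.mem_nhds hzK) hz')
    (hg_pos _ hzK).ne' (hz'.mono fun _ h => h.2)
  rwa [inv_div] at hzd

theorem hasDerivAt_sub_div_of_tangent_eq_zero {φ z P : ℝ → ℝ} {K z' φ' : ℝ}
    (hP : P =ᶠ[𝓝 K] fun k => (k - z k) / φ (z k)) (hz : HasDerivAt z z' K)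
    (hφ : HasDerivAt φ φ' (z K)) (hφz : φ (z K) ≠ 0) (h : (K - z K) * φ' + φ (z K) = 0) :
    HasDerivAt P (φ (z K))⁻¹ K := by
  have hquot : HasDerivAt (fun k => (k - z k) / φ (z k))
      (((1 - z') * φ (z K) - (K - z K) * (φ' * z')) / φ (z K) ^ 2) K :=
    ((hasDerivAt_id K).sub hz).div (hφ.comp K hz) hφz
  refine (hquot.congr_of_eventuallyEq hP).congr_deriv ?_
  field_simp
  linear_combination -z' * h

theorem hasDerivAt_deriv_of_tangent_eq_zero {φ z P : ℝ → ℝ} {s U : Set ℝ} {K : ℝ}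
    (hs : IsOpen s) (hs' : Convex ℝ s) (hC2 : ContDiffOn ℝ 2 φ s)
    (hφ : ∀ x ∈ s, 0 < φ x) (hφ' : ∀ x ∈ s, deriv φ x ≠ 0)
    (hφ'' : ∀ x ∈ s, 0 < deriv (deriv φ) x) (hU : IsOpen U)
    (hz : ∀ k ∈ U, z k ∈ s ∧ (k - z k) * deriv φ (z k) + φ (z k) = 0)
    (hP : ∀ k ∈ U, P k = (k - z k) / φ (z k)) (hK : K ∈ U) :
    HasDerivAt (deriv P)
      (deriv φ (z K) ^ 2 / ((K - z K) * φ (z K) ^ 2 * deriv (deriv φ) (z K))) K := by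
  have hz' : ∀ k ∈ U, HasDerivAt z (deriv φ (z k) ^ 2 / (φ (z k) * deriv (deriv φ) (z k))) k :=
    fun k hk => hasDerivAt_of_tangent_eq_zero hs hs' hC2 hφ hφ' hφ''
      ((hU.eventually_mem hk).mono hz)
  have hP' : deriv P =ᶠ[𝓝 K] fun k => (φ (z k))⁻¹ := by
    filter_upwards [hU.eventually_mem hK] with k hk
    exact (hasDerivAt_sub_div_of_tangent_eq_zero ((hU.eventually_mem hk).mono hP) (hz' k hk)
      (hC2.hasDerivAt_and_hasDerivAt_deriv hs (hz k hk).1).1 (hφ _ (hz k hk).1).ne'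
      (hz k hk).2).deriv
  obtain ⟨hzK, htan⟩ := hz K hK
  have hKz : K - z K = -φ (z K) / deriv φ (z K) := by
    rw [eq_div_iff (hφ' _ hzK)]
    linarith
  refine ((((hC2.hasDerivAt_and_hasDerivAt_deriv hs hzK).1.comp K (hz' K hK)).inv
    (hφ _ hzK).ne').congr_of_eventuallyEq hP').congr_deriv ?_
  have hφ''z := (hφ'' _ hzK).ne'
  rw [hKz, Function.comp_apply]
  field_simp

theorem stmt_10_general (x₀ : ℝ) (hx₀ : 0 < x₀) (φ P z : ℝ → ℝ)
    (hC2 : ContDiffOn ℝ 2 φ (Set.Ioo 0 x₀))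
    (hφ'' : ∀ x ∈ Set.Ioo (0:ℝ) x₀, 0 < deriv (deriv φ) x)
    (hdec : StrictAntiOn φ (Set.Ioc 0 x₀))
    (hφx₀ : φ x₀ = 1)
    (hz : ∀ K ∈ Set.Ioo (0:ℝ) (x₀ - 1 / deriv φ x₀),
      z K ∈ Set.Ioo 0 x₀ ∧ (K - z K) * deriv φ (z K) + φ (z K) = 0)
    (hP : ∀ K ∈ Set.Ioo (0:ℝ) (x₀ - 1 / deriv φ x₀),
      P K = (K - z K) / φ (z K)) :
    ∀ K ∈ Set.Ioo (0:ℝ) (x₀ - 1 / deriv φ x₀),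
      deriv (deriv P) K =
        (deriv φ (z K)) ^ 2 /
          ((K - z K) * (φ (z K)) ^ 2 * deriv (deriv φ) (z K)) ∧
      0 < deriv (deriv P) K := by
  intro K hK
  have hφ_pos : ∀ x ∈ Ioo 0 x₀, 0 < φ x := fun x hx => by
    linarith [hdec ⟨hx.1, hx.2.le⟩ ⟨hx₀, le_rfl⟩ hx.2]
  have hφ'_mono : StrictMonoOn (deriv φ) (Ioo 0 x₀) :=
    strictMonoOn_of_hasDerivAt_pos isOpen_Ioo (convex_Ioo 0 x₀)
      (fun x hx => (hC2.hasDerivAt_and_hasDerivAt_deriv isOpen_Ioo hx).2) hφ''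
  have hφ'_neg : ∀ x ∈ Ioo 0 x₀, deriv φ x < 0 := fun x hx =>
    deriv_neg_of_antitoneOn_of_strictMonoOn_deriv (hdec.antitoneOn.mono Ioo_subset_Ioc_self)
      hφ'_mono hx
  have hformula := (hasDerivAt_deriv_of_tangent_eq_zero isOpen_Ioo (convex_Ioo 0 x₀) hC2 hφ_pos
    (fun x hx => (hφ'_neg x hx).ne) hφ'' isOpen_Ioo hz hP hK).deriv
  obtain ⟨hzK, htan⟩ := hz K hK
  have hKz : 0 < K - z K := pos_of_mul_neg_left (by linarith [hφ_pos _ hzK]) (hφ'_neg _ hzK).le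
  refine ⟨hformula, hformula ▸ div_pos (sq_pos_of_ne_zero (hφ'_neg _ hzK).ne)
    (mul_pos (mul_pos hKz (pow_pos (hφ_pos _ hzK) 2)) (hφ'' _ hzK))⟩

theorem stmt_10 (x₀ : ℝ) (hx₀ : 0 < x₀) (φ P z : ℝ → ℝ)
    (hC2 : ContDiffOn ℝ 2 φ (Set.Ioo 0 x₀))
    (hφ'' : ∀ x ∈ Set.Ioo (0:ℝ) x₀, 0 < deriv (deriv φ) x)
    (hdec : StrictAntiOn φ (Set.Ioc 0 x₀))
    (hconv : ConvexOn ℝ (Set.Ioc 0 x₀) φ)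
    (hφx₀ : φ x₀ = 1)
    (hφ'x₀ : deriv φ x₀ < 0)
    (hz : ∀ K ∈ Set.Ioo (0:ℝ) (x₀ - 1 / deriv φ x₀),
      z K ∈ Set.Ioo 0 x₀ ∧ (K - z K) * deriv φ (z K) + φ (z K) = 0)
    (hzuniq : ∀ K ∈ Set.Ioo (0:ℝ) (x₀ - 1 / deriv φ x₀),
      ∀ w ∈ Set.Ioo (0:ℝ) x₀,
        (K - w) * deriv φ w + φ w = 0 → w = z K)
    (hP : ∀ K ∈ Set.Ioo (0:ℝ) (x₀ - 1 / deriv φ x₀),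
      P K = (K - z K) / φ (z K)) :
    ∀ K ∈ Set.Ioo (0:ℝ) (x₀ - 1 / deriv φ x₀),
      deriv (deriv P) K =
        (deriv φ (z K)) ^ 2 /
          ((K - z K) * (φ (z K)) ^ 2 * deriv (deriv φ) (z K)) ∧
      0 < deriv (deriv P) K :=
  stmt_10_general x₀ hx₀ φ P z hC2 hφ'' hdec hφx₀ hz hP
end

section
/- In the setting of the previous statement, for each fixed K ≤ K*, the extension of φ to (x₀,∞) defined as any convex decreasing extension with D⁻φ(x₀) = −1/(K*−x₀) satisfies φ(x) ≥ (K−x)⁺/P(K) for all x>0. In particular, for x₀ < x < K one has φ(x) ≥ (K*−x)/(K*−x₀) ≥ (K−x)/(K−x₀) ≥ (K−x)/P(K). -/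
/-!
At `x₀` the supremum is at least `1`, attained at `K*` where `P(K*) = K* - x₀`. Convexity with left
slope `-1/(K* - x₀)` at `x₀` then keeps `φ` above the line through `(x₀, 1)` and `(K*, 0)` to the
right of `x₀`, which dominates `(K - x)/P(K)` there; to the left of `x₀`, `K` is itself a competitor
in the supremum defining `φ`.
-/

open Set Filter Topology

lemma ConvexOn.add_mul_sub_le_of_tendsto_slope_left {S : Set ℝ} {f : ℝ → ℝ} {a d x : ℝ}
    (hf : ConvexOn ℝ S f) (hS : ∀ᶠ ε in 𝓝[>] 0, a - ε ∈ S) (hx : x ∈ S) (hax : a < x)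
    (hd : Tendsto (fun ε => (f a - f (a - ε)) / ε) (𝓝[>] 0) (𝓝 d)) :
    f a + d * (x - a) ≤ f x := by
  have hslope : d ≤ (f x - f a) / (x - a) := by
    refine le_of_tendsto hd ?_
    filter_upwards [hS, self_mem_nhdsWithin] with ε hε (hε₀ : 0 < ε)
    have := hf.slope_mono_adjacent hε hx (sub_lt_self a hε₀) hax
    rwa [sub_sub_cancel] at this
  rw [le_div_iff₀ (sub_pos.mpr hax)] at hslope
  linarith

lemma Real.le_sSup_of_sSup_pos {s : Set ℝ} {y : ℝ} (hs : 0 < sSup s) (hy : y ∈ s) :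
    y ≤ sSup s := by
  refine le_csSup ?_ hy
  by_contra hbdd
  rw [Real.sSup_of_not_bddAbove hbdd] at hs
  exact hs.false

lemma one_le_sSup_sub_div {P : ℝ → ℝ} {a b : ℝ} (hP : ∀ k ≥ a, k - a ≤ P k) (hab : a < b)
    (hPb : P b = b - a) : 1 ≤ sSup ((fun k => (k - a) / P k) '' Ici a) := by
  have hbdd : BddAbove ((fun k => (k - a) / P k) '' Ici a) := by
    refine ⟨1, ?_⟩
    rintro _ ⟨k, hk, rfl⟩
    exact div_le_one_of_le₀ (hP k hk) ((sub_nonneg.mpr hk).trans (hP k hk))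
  have hone : (b - a) / P b = 1 := by
    rw [hPb, div_self (sub_pos.mpr hab).ne']
  exact hone ▸ le_csSup hbdd ⟨b, hab.le, rfl⟩

lemma sub_div_sub_le_sub_div_sub {a x K K' : ℝ} (hax : a ≤ x) (haK : a < K) (hKK' : K ≤ K') :
    (K - x) / (K - a) ≤ (K' - x) / (K' - a) := by
  rw [div_le_div_iff₀ (by linarith) (by linarith)]
  nlinarith

theorem stmt_18_general (x₀ Kstar : ℝ) (hx₀ : 0 < x₀) (hK : x₀ < Kstar)
    (P φ : ℝ → ℝ)
    (hPbd : ∀ k ≥ (0:ℝ), max (k - x₀) 0 ≤ P k ∧ P k ≤ k)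
    (hPlin : ∀ k, Kstar ≤ k → P k = k - x₀)
    (hφ : ∀ x ∈ Set.Ioc (0:ℝ) x₀,
      φ x = sSup ((fun K => (K - x) / P K) '' Set.Ici x))
    (hφconv : ConvexOn ℝ (Set.Ioi 0) φ)
    (hφpos : ∀ x > (0:ℝ), 0 < φ x)
    (hφ' : Filter.Tendsto (fun ε => (φ x₀ - φ (x₀ - ε)) / ε)
      (nhdsWithin 0 (Set.Ioi 0)) (nhds (-1 / (Kstar - x₀))))
    (K : ℝ) (hKmem : K ∈ Set.Ioc x₀ Kstar) :
    (∀ x > (0:ℝ), max (K - x) 0 / P K ≤ φ x) ∧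
    ∀ x ∈ Set.Ioo x₀ K,
      (Kstar - x) / (Kstar - x₀) ≤ φ x ∧
      (K - x) / (K - x₀) ≤ (Kstar - x) / (Kstar - x₀) ∧
      (K - x) / P K ≤ (K - x) / (K - x₀) := by
  obtain ⟨hx₀K, hKKstar⟩ := hKmem
  have hPge : ∀ k ≥ x₀, k - x₀ ≤ P k := fun k hk =>
    (le_max_left _ _).trans (hPbd k (hx₀.le.trans hk)).1
  have hφx₀ : 1 ≤ φ x₀ :=
    hφ x₀ ⟨hx₀, le_rfl⟩ ▸ one_le_sSup_sub_div hPge hK (hPlin Kstar le_rfl)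
  have hleft : ∀ᶠ ε in 𝓝[>] 0, x₀ - ε ∈ Ioi 0 :=
    ((eventually_lt_nhds hx₀).filter_mono nhdsWithin_le_nhds).mono fun _ => sub_pos.mpr
  have htangent : ∀ x, x₀ < x → (Kstar - x) / (Kstar - x₀) ≤ φ x := fun x hx =>
    calc (Kstar - x) / (Kstar - x₀) = 1 + -1 / (Kstar - x₀) * (x - x₀) := by
          field_simp [(sub_pos.mpr hK).ne']; ring
      _ ≤ φ x₀ + -1 / (Kstar - x₀) * (x - x₀) := by gcongr
      _ ≤ φ x := hφconv.add_mul_sub_le_of_tendsto_slope_left hleft (hx₀.trans hx) hx hφ'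
  have hchain : ∀ x ∈ Ioo x₀ K, (Kstar - x) / (Kstar - x₀) ≤ φ x ∧
      (K - x) / (K - x₀) ≤ (Kstar - x) / (Kstar - x₀) ∧ (K - x) / P K ≤ (K - x) / (K - x₀) :=
    fun x hx => ⟨htangent x hx.1, sub_div_sub_le_sub_div_sub hx.1.le hx₀K hKKstar,
      div_le_div_of_nonneg_left (by linarith [hx.2]) (by linarith) (hPge K hx₀K.le)⟩
  refine ⟨fun x hx => ?_, hchain⟩
  rcases le_or_gt x x₀ with hle | hgt
  · rw [max_eq_left (by linarith), hφ x ⟨hx, hle⟩]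
    exact Real.le_sSup_of_sSup_pos (hφ x ⟨hx, hle⟩ ▸ hφpos x hx) ⟨K, by simp; linarith, rfl⟩
  rcases le_or_gt K x with hKx | hxK
  · rw [max_eq_right (by linarith), zero_div]
    exact (hφpos x hx).le
  obtain ⟨h₁, h₂, h₃⟩ := hchain x ⟨hgt, hxK⟩
  rw [max_eq_left (by linarith)]
  linarith

theorem stmt_18 (x₀ Kstar : ℝ) (hx₀ : 0 < x₀) (hK : x₀ < Kstar)
    (P φ : ℝ → ℝ)
    (hPmono : MonotoneOn P (Set.Ici 0))
    (hPconv : ConvexOn ℝ (Set.Ici 0) P)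
    (hPbd : ∀ k ≥ (0:ℝ), max (k - x₀) 0 ≤ P k ∧ P k ≤ k)
    (hPlin : ∀ k, Kstar ≤ k → P k = k - x₀)
    (hPx₀ : 0 < P x₀)
    (hφ : ∀ x ∈ Set.Ioc (0:ℝ) x₀,
      φ x = sSup ((fun K => (K - x) / P K) '' Set.Ici x))
    (hφconv : ConvexOn ℝ (Set.Ioi 0) φ)
    (hφdec : AntitoneOn φ (Set.Ioi 0))
    (hφpos : ∀ x > (0:ℝ), 0 < φ x)
    (hφ' : Filter.Tendsto (fun ε => (φ x₀ - φ (x₀ - ε)) / ε)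
      (nhdsWithin 0 (Set.Ioi 0)) (nhds (-1 / (Kstar - x₀))))
    (K : ℝ) (hKmem : K ∈ Set.Ioc x₀ Kstar) :
    (∀ x > (0:ℝ), max (K - x) 0 / P K ≤ φ x) ∧
    ∀ x ∈ Set.Ioo x₀ K,
      (Kstar - x) / (Kstar - x₀) ≤ φ x ∧
      (K - x) / (K - x₀) ≤ (Kstar - x) / (Kstar - x₀) ∧
      (K - x) / P K ≤ (K - x) / (K - x₀) :=
  stmt_18_general x₀ Kstar hx₀ hK P φ hPbd hPlin hφ hφconv hφpos hφ' K hKmem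
end

section
/- Let φ(x)=(x+1)/(2x²) for x>0 and r>0. If σ(x)² := 2r(φ(x)−xφ'(x))/(x²φ''(x)), then σ(x)² = r(2x+3)/(x+3) for all x>0. Moreover, with x₀=1 (so φ(1)=1), the function P(K)=sup_{z≤1}(K−z)/φ(z) satisfies P(K) = ((K+9)^{3/2}(K+1)^{1/2} − (27+18K−K²))/4 for 0<K≤5/3 and P(K)=K−1 for K≥5/3. -/
/-!
The formula for `σ²` is a direct computation from `φ' x = -(x + 2) / (2 x³)` and
`φ'' x = (x + 3) / x⁴`. On `(0, 1]` the ratio `(K - z) / φ z` is `g z = 2 z² (K - z) / (z + 1)`,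
whose critical point is the positive root `z₀ = (K - 3 + s) / 4`, `s = √((K + 1) (K + 9))`, of
`2 z² - (K - 3) z - 2 K`. It lies in `(0, 1]` exactly when `K ≤ 5 / 3`, and then `g z ≤ g z₀`
because `g z₀ (z + 1) - 2 z² (K - z)` has a double root at `z₀`. For `K ≥ 5 / 3`, `g` is
increasing on `(0, 1]` and the supremum is `g 1 = K - 1`.
-/

open Set Filter

lemma hasDerivAt_add_one_div_two_mul_sq {x : ℝ} (hx : x ≠ 0) :
    HasDerivAt (fun y : ℝ => (y + 1) / (2 * y ^ 2)) (-(x + 2) / (2 * x ^ 3)) x := by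
  have h := ((hasDerivAt_id x).add_const 1).div ((hasDerivAt_pow 2 x).const_mul 2)
    (by positivity)
  refine h.congr_deriv ?_
  simp only [id]
  field_simp
  ring

lemma hasDerivAt_neg_add_two_div_two_mul_cube {x : ℝ} (hx : x ≠ 0) :
    HasDerivAt (fun y : ℝ => -(y + 2) / (2 * y ^ 3)) ((x + 3) / x ^ 4) x := by
  have h := ((hasDerivAt_id x).add_const 2).neg.div ((hasDerivAt_pow 3 x).const_mul 2)
    (by positivity)
  refine h.congr_deriv ?_
  simp only [id, Pi.neg_apply]
  field_simp
  ring

section Derivatives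

variable {φ : ℝ → ℝ} (hφ : ∀ x > (0:ℝ), φ x = (x + 1) / (2 * x ^ 2))
include hφ

lemma deriv_eq_neg_add_two_div {x : ℝ} (hx : 0 < x) : deriv φ x = -(x + 2) / (2 * x ^ 3) := by
  have hev : φ =ᶠ[nhds x] fun y => (y + 1) / (2 * y ^ 2) :=
    eventuallyEq_of_mem (Ioi_mem_nhds hx) hφ
  rw [hev.deriv_eq]
  exact (hasDerivAt_add_one_div_two_mul_sq hx.ne').deriv

lemma deriv_deriv_eq_neg_add_two_div {x : ℝ} (hx : 0 < x) : deriv (deriv φ) x = (x + 3) / x ^ 4 := by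
  have hev : deriv φ =ᶠ[nhds x] fun y => -(y + 2) / (2 * y ^ 3) :=
    eventuallyEq_of_mem (Ioi_mem_nhds hx) fun _ hy => deriv_eq_neg_add_two_div hφ hy
  rw [hev.deriv_eq]
  exact (hasDerivAt_neg_add_two_div_two_mul_cube hx.ne').deriv

end Derivatives

lemma rpow_three_halves_mul_rpow_half {a b : ℝ} (ha : 0 ≤ a) :
    a ^ ((3:ℝ)/2) * b ^ ((1:ℝ)/2) = a * √(a * b) := by
  rw [show (3:ℝ)/2 = 1 + 1/2 by norm_num, Real.rpow_add' ha (by norm_num), Real.rpow_one,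
    ← Real.sqrt_eq_rpow, ← Real.sqrt_eq_rpow, Real.sqrt_mul ha, mul_assoc]

section Maximization

variable {K : ℝ}

lemma three_sub_lt_of_sq_eq {s : ℝ} (hK : 0 < K) (hs : 0 ≤ s) (hs2 : s ^ 2 = (K + 1) * (K + 9)) :
    3 - K < s := by
  nlinarith

lemma two_mul_sq_mul_sub_critical {s : ℝ} (hs2 : s ^ 2 = (K + 1) * (K + 9)) :
    2 * ((K - 3 + s) / 4) ^ 2 * (K - (K - 3 + s) / 4) =
      ((K + 9) * s - (27 + 18 * K - K ^ 2)) / 4 * ((K - 3 + s) / 4 + 1) := by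
  linear_combination (-(9 + s + K) / 32) * hs2

lemma two_mul_sq_mul_sub_div_le {s z : ℝ} (hK : 0 < K) (hs : 0 ≤ s)
    (hs2 : s ^ 2 = (K + 1) * (K + 9)) (hz : 0 < z) :
    2 * z ^ 2 * (K - z) / (z + 1) ≤ ((K + 9) * s - (27 + 18 * K - K ^ 2)) / 4 := by
  set z₀ := (K - 3 + s) / 4 with hz₀_def
  set M := ((K + 9) * s - (27 + 18 * K - K ^ 2)) / 4
  have hz₀ : 0 < z₀ := by linarith [three_sub_lt_of_sq_eq hK hs hs2]
  have hz₀K : z₀ < K := by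
    have : s < 3 * K + 3 := by nlinarith
    rw [hz₀_def]; linarith
  have hM : 0 < M := by
    have htouch : 2 * z₀ ^ 2 * (K - z₀) = M * (z₀ + 1) := two_mul_sq_mul_sub_critical hs2
    nlinarith [mul_pos (mul_pos hz₀ hz₀) (sub_pos.2 hz₀K)]
  have hdouble : (2 * z ^ 3 - 2 * K * z ^ 2 + M * z + M) * z₀ ^ 2 =
      (z - z₀) ^ 2 * (2 * z₀ ^ 2 * z + M) := by
    linear_combination ((-81/128 : ℝ) * z + (-9/16) * z^2 + (15/64) * s * z
      + (1/16) * s * z^2 + (-1/128) * s^2 * z + (15/64) * K * z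
      + (1/16) * K * z^2 + (-1/64) * K * s * z + (-1/128) * K^2 * z) * hs2
  rw [div_le_iff₀ (by linarith)]
  have : 0 ≤ (z - z₀) ^ 2 * (2 * z₀ ^ 2 * z + M) := by positivity
  nlinarith [mul_pos hz₀ hz₀]

lemma isGreatest_two_mul_sq_mul_sub_div_of_le {s : ℝ} (hK : 0 < K) (hK' : K ≤ 5 / 3)
    (hs : 0 ≤ s) (hs2 : s ^ 2 = (K + 1) * (K + 9)) :
    IsGreatest ((fun z => 2 * z ^ 2 * (K - z) / (z + 1)) '' Ioc 0 1)
      (((K + 9) * s - (27 + 18 * K - K ^ 2)) / 4) := by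
  have hpos := three_sub_lt_of_sq_eq hK hs hs2
  refine ⟨⟨(K - 3 + s) / 4, ⟨by linarith, by nlinarith⟩, ?_⟩,
    forall_mem_image.2 fun z hz => two_mul_sq_mul_sub_div_le hK hs hs2 hz.1⟩
  rw [div_eq_iff (by linarith), two_mul_sq_mul_sub_critical hs2]

lemma isGreatest_two_mul_sq_mul_sub_div_of_ge (hK : 5 / 3 ≤ K) :
    IsGreatest ((fun z => 2 * z ^ 2 * (K - z) / (z + 1)) '' Ioc 0 1) (K - 1) := by
  refine ⟨⟨1, ⟨one_pos, le_rfl⟩, by norm_num⟩, forall_mem_image.2 fun z ⟨hz₀, hz₁⟩ => ?_⟩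
  rw [div_le_iff₀ (by linarith)]
  have h1z : 0 ≤ 1 - z := by linarith
  nlinarith [mul_nonneg (mul_nonneg h1z h1z) (by linarith : (0:ℝ) ≤ K - 1),
    mul_nonneg (mul_nonneg h1z hz₀.le) (by linarith : (0:ℝ) ≤ 3 * K - 5),
    mul_nonneg (mul_nonneg h1z hz₀.le) h1z]

end Maximization

lemma image_sub_div_eq {φ : ℝ → ℝ} (hφ : ∀ x > (0:ℝ), φ x = (x + 1) / (2 * x ^ 2)) (K : ℝ) :
    (fun z => (K - z) / φ z) '' Ioc 0 1 = (fun z => 2 * z ^ 2 * (K - z) / (z + 1)) '' Ioc 0 1 :=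
  image_congr fun z hz => by
    rw [hφ z hz.1]
    have : z + 1 ≠ 0 := by linarith [hz.1]
    field_simp [hz.1.ne']

theorem stmt_19_general (r : ℝ)
    (φ P : ℝ → ℝ)
    (hφ : ∀ x > (0:ℝ), φ x = (x + 1) / (2 * x ^ 2))
    (hP : ∀ K > (0:ℝ),
      P K = sSup ((fun z => (K - z) / φ z) '' Set.Ioc 0 1)) :
    (∀ x > (0:ℝ),
      2 * r * (φ x - x * deriv φ x) / (x ^ 2 * deriv (deriv φ) x) =
        r * (2 * x + 3) / (x + 3)) ∧
    (∀ K, 0 < K → K ≤ 5 / 3 →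
      P K = ((K + 9) ^ ((3:ℝ)/2) * (K + 1) ^ ((1:ℝ)/2)
        - (27 + 18 * K - K ^ 2)) / 4) ∧
    (∀ K, 5 / 3 ≤ K → P K = K - 1) := by
  refine ⟨fun x hx => ?_, fun K hK hK' => ?_, fun K hK => ?_⟩
  · rw [hφ x hx, deriv_eq_neg_add_two_div hφ hx, deriv_deriv_eq_neg_add_two_div hφ hx]
    field_simp
    ring
  · rw [hP K hK, image_sub_div_eq hφ,
      (isGreatest_two_mul_sq_mul_sub_div_of_le hK hK' (Real.sqrt_nonneg _)
        (Real.sq_sqrt (by positivity))).csSup_eq,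
      rpow_three_halves_mul_rpow_half (by linarith), mul_comm (K + 9) (K + 1)]
  · rw [hP K (by linarith), image_sub_div_eq hφ,
      (isGreatest_two_mul_sq_mul_sub_div_of_ge hK).csSup_eq]

theorem stmt_19 (r : ℝ) (hr : 0 < r)
    (φ P : ℝ → ℝ)
    (hφ : ∀ x > (0:ℝ), φ x = (x + 1) / (2 * x ^ 2))
    (hP : ∀ K > (0:ℝ),
      P K = sSup ((fun z => (K - z) / φ z) '' Set.Ioc 0 1)) :
    (∀ x > (0:ℝ),
      2 * r * (φ x - x * deriv φ x) / (x ^ 2 * deriv (deriv φ) x) =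
        r * (2 * x + 3) / (x + 3)) ∧
    (∀ K, 0 < K → K ≤ 5 / 3 →
      P K = ((K + 9) ^ ((3:ℝ)/2) * (K + 1) ^ ((1:ℝ)/2)
        - (27 + 18 * K - K ^ 2)) / 4) ∧
    (∀ K, 5 / 3 ≤ K → P K = K - 1) :=
  stmt_19_general r φ P hφ hP
end
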